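/- arXiv:1310.4737 — 5 statements merged into one kernel-verified Lean document; each statement's English description precedes it below -/
import Mathlib

section
/- Let X and Y be real Banach spaces that are sphere equivalent, i.e., there exists a uniform homeomorphism between the unit spheres S(X) and S(Y). Then for any exponent p ∈ [1,∞) and any sequence {G_n} of finite connected graphs, {G_n} is a family of (X,p)-anders if and only if it is a family of (Y,p)-anders. -/
open scoped ENNReal

structure MultiGraph where
  V : Type
  [fintypeV : Fintype V]
  m : V → V → ℕ
  symm : ∀ v w, m v w = m w v

attribute [instance] MultiGraph.fintypeV

namespace MultiGraph

def toSimple (G : MultiGraph) : SimpleGraph G.V where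
  Adj v w := v ≠ w ∧ 0 < G.m v w
  symm := by
    constructor
    intro v w h
    exact ⟨h.1.symm, by rw [G.symm]; exact h.2⟩
  loopless := ⟨fun v h => h.1 rfl⟩

def Connected (G : MultiGraph) : Prop := G.toSimple.Connected

noncomputable def dist (G : MultiGraph) (v w : G.V) : ℕ := G.toSimple.dist v w

noncomputable def diam (G : MultiGraph) : ℕ :=
  Finset.univ.sup fun q : G.V × G.V => G.dist q.1 q.2

def deg (G : MultiGraph) (v : G.V) : ℕ := ∑ w, G.m v w

noncomputable def maxDeg (G : MultiGraph) : ℕ := Finset.univ.sup fun v => G.deg v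

noncomputable def mean (G : MultiGraph) {X : Type*} [NormedAddCommGroup X]
    [NormedSpace ℝ X] (f : G.V → X) : X :=
  (Fintype.card G.V : ℝ)⁻¹ • ∑ v, f v

noncomputable def lam1 (G : MultiGraph) (X : Type*) [NormedAddCommGroup X]
    [NormedSpace ℝ X] (p : ℝ) : ℝ :=
  (1/2) * sInf {r : ℝ | ∃ f : G.V → X, (¬ ∀ v w, f v = f w) ∧
    r = (∑ v, ∑ w, (G.m v w : ℝ) * ‖f w - f v‖ ^ p) / (∑ v, ‖f v - G.mean f‖ ^ p)}

noncomputable def distortion (G : MultiGraph) (X : Type*) [NormedAddCommGroup X] : ℝ :=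
  sInf {c : ℝ | ∃ (f : G.V → X) (L₁ L₂ : ℝ), 0 < L₁ ∧ 0 < L₂ ∧
    (∀ v w, ‖f v - f w‖ ≤ L₁ * (G.dist v w : ℝ)) ∧
    (∀ v w, (G.dist v w : ℝ) ≤ L₂ * ‖f v - f w‖) ∧ c = L₁ * L₂}

end MultiGraph

def IsAnderFamily (G : ℕ → MultiGraph) (X : Type*) [NormedAddCommGroup X]
    [NormedSpace ℝ X] (p : ℝ) : Prop :=
  (∃ D : ℕ, ∀ n, (G n).maxDeg ≤ D) ∧
  Filter.Tendsto (fun n => (G n).diam) Filter.atTop Filter.atTop ∧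
  ∃ ε : ℝ, 0 < ε ∧ ∀ n, ε ≤ (G n).lam1 X p

def SphereEquiv (X Y : Type*) [NormedAddCommGroup X] [NormedAddCommGroup Y] : Prop :=
  ∃ φ : Metric.sphere (0:X) 1 ≃ Metric.sphere (0:Y) 1,
    UniformContinuous φ ∧ UniformContinuous φ.symm
section RadExt

variable {X Y : Type*} [NormedAddCommGroup X] [NormedSpace ℝ X]
  [NormedAddCommGroup Y] [NormedSpace ℝ Y]

lemma norm_coe_sphere {Z : Type*} [NormedAddCommGroup Z] (a : Metric.sphere (0:Z) 1) :
    ‖(a : Z)‖ = 1 := by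
  have := a.2
  rwa [mem_sphere_zero_iff_norm] at this

lemma mem_unit_sphere_of_ne_zero {x : X} (h : x ≠ 0) :
    (‖x‖⁻¹ • x) ∈ Metric.sphere (0:X) 1 := by
  rw [mem_sphere_zero_iff_norm, norm_smul, norm_inv, norm_norm,
    inv_mul_cancel₀ (norm_ne_zero_iff.mpr h)]

open scoped Classical in
noncomputable def radExt (φ : Metric.sphere (0:X) 1 → Metric.sphere (0:Y) 1) (x : X) : Y :=
  if h : x = 0 then 0
  else ‖x‖ • ((φ ⟨‖x‖⁻¹ • x, mem_unit_sphere_of_ne_zero h⟩ : Metric.sphere (0:Y) 1) : Y)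

open scoped Classical in
lemma radExt_zero (φ : Metric.sphere (0:X) 1 → Metric.sphere (0:Y) 1) :
    radExt φ 0 = 0 := dif_pos rfl

open scoped Classical in
lemma norm_radExt (φ : Metric.sphere (0:X) 1 → Metric.sphere (0:Y) 1) (x : X) :
    ‖radExt φ x‖ = ‖x‖ := by
  rw [radExt]
  split
  · simp [*]
  · rw [norm_smul, norm_norm, norm_coe_sphere, mul_one]

open scoped Classical in
lemma radExt_leftInverse (φ : Metric.sphere (0:X) 1 ≃ Metric.sphere (0:Y) 1) (x : X) :
    radExt (φ.symm : Metric.sphere (0:Y) 1 → Metric.sphere (0:X) 1) (radExt (φ : Metric.sphere (0:X) 1 → Metric.sphere (0:Y) 1) x) = x := by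
  by_cases h : x = 0
  · rw [h, radExt_zero, radExt_zero]
  · have hx : ‖x‖ ≠ 0 := norm_ne_zero_iff.mpr h
    have hxpos : (0:ℝ) < ‖x‖ := norm_pos_iff.mpr h
    set u : Metric.sphere (0:X) 1 := ⟨‖x‖⁻¹ • x, mem_unit_sphere_of_ne_zero h⟩ with hu
    have hval : radExt (φ : Metric.sphere (0:X) 1 → Metric.sphere (0:Y) 1) x
        = ‖x‖ • ((φ u : Metric.sphere (0:Y) 1) : Y) := by
      rw [radExt, dif_neg h]
    have hnφu : ‖((φ u : Metric.sphere (0:Y) 1) : Y)‖ = 1 := norm_coe_sphere _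
    have hy : (‖x‖ : ℝ) • ((φ u : Metric.sphere (0:Y) 1) : Y) ≠ 0 := by
      intro hcon
      have : ‖(‖x‖ : ℝ) • ((φ u : Metric.sphere (0:Y) 1) : Y)‖ = 0 := by rw [hcon, norm_zero]
      rw [norm_smul, norm_norm, hnφu, mul_one] at this
      exact hx this
    have hnorm : ‖(‖x‖ : ℝ) • ((φ u : Metric.sphere (0:Y) 1) : Y)‖ = ‖x‖ := by
      rw [norm_smul, norm_norm, hnφu, mul_one]
    rw [hval, radExt, dif_neg hy]
    have harg : (⟨‖(‖x‖ : ℝ) • ((φ u : Metric.sphere (0:Y) 1) : Y)‖⁻¹ •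
        ((‖x‖ : ℝ) • ((φ u : Metric.sphere (0:Y) 1) : Y)), mem_unit_sphere_of_ne_zero hy⟩ :
        Metric.sphere (0:Y) 1) = φ u := by
      apply Subtype.ext
      simp only [hnorm]
      rw [smul_smul, inv_mul_cancel₀ hx, one_smul]
    rw [harg, Equiv.symm_apply_apply, hnorm, hu]
    simp only [smul_smul]
    rw [mul_inv_cancel₀ hx, one_smul]

end RadExt

section Bound

variable {X Y : Type*} [NormedAddCommGroup X] [NormedSpace ℝ X]
  [NormedAddCommGroup Y] [NormedSpace ℝ Y]

open scoped Classical in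
lemma radExt_bound (φ : Metric.sphere (0:X) 1 → Metric.sphere (0:Y) 1)
    (hφ : UniformContinuous φ) {δ : ℝ} (hδ : 0 < δ) :
    ∃ C : ℝ, 1 ≤ C ∧ ∀ x x' : X,
      ‖radExt φ x - radExt φ x'‖ ≤ C * ‖x - x'‖ + δ * min ‖x‖ ‖x'‖ := by
  obtain ⟨s, hs, hsδ⟩ := Metric.uniformContinuous_iff.mp hφ δ hδ
  refine ⟨1 + 4 / s, le_add_of_nonneg_right (by positivity), ?_⟩
  have key : ∀ x x' : X, ‖x'‖ ≤ ‖x‖ →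
      ‖radExt φ x - radExt φ x'‖ ≤ (1 + 4 / s) * ‖x - x'‖ + δ * min ‖x‖ ‖x'‖ := by
    intro x x' hle
    by_cases hx' : x' = 0
    · subst hx'
      rw [radExt_zero, sub_zero, norm_radExt, sub_zero, norm_zero]
      have h1 : min ‖x‖ (0:ℝ) = 0 := min_eq_right (norm_nonneg x)
      rw [h1, mul_zero, add_zero]
      nlinarith [norm_nonneg x, div_nonneg (by norm_num : (0:ℝ) ≤ 4) hs.le]
    · have hx'pos : (0:ℝ) < ‖x'‖ := norm_pos_iff.mpr hx'
      have hxpos : (0:ℝ) < ‖x‖ := lt_of_lt_of_le hx'pos hle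
      have hx : x ≠ 0 := norm_pos_iff.mp hxpos
      set u : Metric.sphere (0:X) 1 := ⟨‖x‖⁻¹ • x, mem_unit_sphere_of_ne_zero hx⟩ with hu
      set u' : Metric.sphere (0:X) 1 := ⟨‖x'‖⁻¹ • x', mem_unit_sphere_of_ne_zero hx'⟩ with hu'
      have hvx : radExt φ x = ‖x‖ • ((φ u : Metric.sphere (0:Y) 1) : Y) := by
        rw [radExt, dif_neg hx]
      have hvx' : radExt φ x' = ‖x'‖ • ((φ u' : Metric.sphere (0:Y) 1) : Y) := by
        rw [radExt, dif_neg hx']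
      set v : Y := ((φ u : Metric.sphere (0:Y) 1) : Y) with hv
      set v' : Y := ((φ u' : Metric.sphere (0:Y) 1) : Y) with hv'
      have hnv : ‖v‖ = 1 := norm_coe_sphere _
      have hnv' : ‖v'‖ = 1 := norm_coe_sphere _
      -- step A
      have hA : ‖radExt φ x - radExt φ x'‖ ≤ ‖x - x'‖ + ‖x'‖ * ‖v - v'‖ := by
        rw [hvx, hvx']
        have hsplit : (‖x‖ : ℝ) • v - (‖x'‖ : ℝ) • v'
            = (‖x‖ - ‖x'‖) • v + ‖x'‖ • (v - v') := by
          rw [sub_smul, smul_sub]; abel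
        rw [hsplit]
        calc ‖(‖x‖ - ‖x'‖) • v + (‖x'‖ : ℝ) • (v - v')‖
            ≤ ‖(‖x‖ - ‖x'‖) • v‖ + ‖(‖x'‖ : ℝ) • (v - v')‖ := norm_add_le _ _
          _ = |‖x‖ - ‖x'‖| * 1 + ‖x'‖ * ‖v - v'‖ := by
              rw [norm_smul, norm_smul, hnv, Real.norm_eq_abs, Real.norm_eq_abs,
                abs_of_pos hx'pos]
          _ ≤ ‖x - x'‖ + ‖x'‖ * ‖v - v'‖ := by
              have := abs_norm_sub_norm_le x x'
              nlinarith
      -- step B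
      have hB : ‖(u : X) - (u' : X)‖ ≤ 2 * ‖x - x'‖ / ‖x‖ := by
        have hsplit : (u : X) - (u' : X)
            = ‖x‖⁻¹ • (x - x') + (‖x‖⁻¹ - ‖x'‖⁻¹) • x' := by
          show ‖x‖⁻¹ • x - ‖x'‖⁻¹ • x' = _
          rw [smul_sub, sub_smul]; abel
        have h2 : ‖(‖x‖⁻¹ - ‖x'‖⁻¹) • x'‖ ≤ ‖x - x'‖ / ‖x‖ := by
          rw [norm_smul, Real.norm_eq_abs]
          rw [inv_sub_inv (ne_of_gt hxpos) (ne_of_gt hx'pos)]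
          rw [abs_div, abs_of_pos (mul_pos hxpos hx'pos)]
          have habs : |‖x'‖ - ‖x‖| ≤ ‖x - x'‖ := by
            rw [abs_sub_comm]
            exact abs_norm_sub_norm_le x x'
          have heq : |‖x'‖ - ‖x‖| / (‖x‖ * ‖x'‖) * ‖x'‖ = |‖x'‖ - ‖x‖| / ‖x‖ := by
            field_simp
          rw [heq]
          gcongr
        calc ‖(u : X) - (u' : X)‖ ≤ ‖‖x‖⁻¹ • (x - x')‖ + ‖(‖x‖⁻¹ - ‖x'‖⁻¹) • x'‖ := by
              rw [hsplit]; exact norm_add_le _ _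
          _ ≤ ‖x - x'‖ / ‖x‖ + ‖x - x'‖ / ‖x‖ := by
              apply add_le_add _ h2
              rw [norm_smul, Real.norm_eq_abs, abs_of_pos (inv_pos.mpr hxpos),
                inv_mul_eq_div]
          _ = 2 * ‖x - x'‖ / ‖x‖ := by ring
      have hmin : min ‖x‖ ‖x'‖ = ‖x'‖ := min_eq_right hle
      by_cases huu : dist u u' < s
      · have hdd : ‖v - v'‖ ≤ δ := by
          have := hsδ huu
          rw [Subtype.dist_eq, dist_eq_norm] at this
          exact le_of_lt this
        calc ‖radExt φ x - radExt φ x'‖ ≤ ‖x - x'‖ + ‖x'‖ * ‖v - v'‖ := hA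
          _ ≤ (1 + 4 / s) * ‖x - x'‖ + δ * min ‖x‖ ‖x'‖ := by
              rw [hmin]
              have h4 : (0:ℝ) ≤ 4 / s := by positivity
              nlinarith [norm_nonneg (x - x'), norm_nonneg x', mul_le_mul_of_nonneg_left hdd (norm_nonneg x')]
      · push_neg at huu
        have hud : dist u u' = ‖(u : X) - (u' : X)‖ := by
          rw [Subtype.dist_eq, dist_eq_norm]
        have hxb : ‖x‖ ≤ 2 * ‖x - x'‖ / s := by
          have h1 : s ≤ 2 * ‖x - x'‖ / ‖x‖ := le_trans (by rwa [hud] at huu) hB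
          rw [le_div_iff₀ hxpos] at h1
          rw [le_div_iff₀ hs]
          linarith
        have hvv : ‖v - v'‖ ≤ 2 := by
          calc ‖v - v'‖ ≤ ‖v‖ + ‖v'‖ := norm_sub_le _ _
            _ = 2 := by rw [hnv, hnv']; norm_num
        calc ‖radExt φ x - radExt φ x'‖ ≤ ‖x - x'‖ + ‖x'‖ * ‖v - v'‖ := hA
          _ ≤ ‖x - x'‖ + (2 * ‖x - x'‖ / s) * 2 := by
              have hx'b : ‖x'‖ ≤ 2 * ‖x - x'‖ / s := le_trans hle hxb
              nlinarith [norm_nonneg x', norm_nonneg (x - x')]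
          _ ≤ (1 + 4 / s) * ‖x - x'‖ + δ * min ‖x‖ ‖x'‖ := by
              rw [hmin]
              have : (2 * ‖x - x'‖ / s) * 2 = 4 / s * ‖x - x'‖ := by ring
              nlinarith [mul_nonneg hδ.le hx'pos.le]
  intro x x'
  rcases le_total ‖x'‖ ‖x‖ with h | h
  · exact key x x' h
  · rw [norm_sub_rev, min_comm, norm_sub_rev x]
    exact key x' x h

end Bound
section Helpers

variable {Z : Type*} [NormedAddCommGroup Z] [NormedSpace ℝ Z]

namespace MultiGraph

noncomputable def En (G : MultiGraph) (p : ℝ) (f : G.V → Z) : ℝ :=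
  ∑ v, ∑ w, (G.m v w : ℝ) * ‖f w - f v‖ ^ p

noncomputable def Vn (G : MultiGraph) (p : ℝ) (f : G.V → Z) : ℝ :=
  ∑ v, ‖f v - G.mean f‖ ^ p

def ratioSet (G : MultiGraph) (Z : Type*) [NormedAddCommGroup Z] [NormedSpace ℝ Z]
    (p : ℝ) : Set ℝ :=
  {r : ℝ | ∃ f : G.V → Z, (¬ ∀ v w, f v = f w) ∧ r = G.En p f / G.Vn p f}

lemma lam1_eq (G : MultiGraph) (p : ℝ) :
    G.lam1 Z p = (1/2) * sInf (G.ratioSet Z p) := rfl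

lemma En_nonneg (G : MultiGraph) (p : ℝ) (f : G.V → Z) : 0 ≤ G.En p f :=
  Finset.sum_nonneg fun v _ => Finset.sum_nonneg fun w _ =>
    mul_nonneg (Nat.cast_nonneg _) (Real.rpow_nonneg (norm_nonneg _) _)

lemma Vn_nonneg (G : MultiGraph) (p : ℝ) (f : G.V → Z) : 0 ≤ G.Vn p f :=
  Finset.sum_nonneg fun v _ => Real.rpow_nonneg (norm_nonneg _) _

lemma Vn_pos (G : MultiGraph) (p : ℝ) (f : G.V → Z)
    (hf : ¬ ∀ v w, f v = f w) : 0 < G.Vn p f := by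
  have hv : ∃ v, f v ≠ G.mean f := by
    by_contra h
    push_neg at h
    exact hf fun v w => by rw [h v, h w]
  obtain ⟨v, hv⟩ := hv
  refine Finset.sum_pos' (fun w _ => Real.rpow_nonneg (norm_nonneg _) _) ⟨v, Finset.mem_univ v, ?_⟩
  exact Real.rpow_pos_of_pos (norm_pos_iff.mpr (sub_ne_zero.mpr hv)) _

lemma ratioSet_bddBelow (G : MultiGraph) (p : ℝ) :
    BddBelow (G.ratioSet Z p) := by
  refine ⟨0, fun r hr => ?_⟩
  obtain ⟨f, _, rfl⟩ := hr
  exact div_nonneg (G.En_nonneg p f) (G.Vn_nonneg p f)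

lemma gap_ratio {G : MultiGraph} {p ε : ℝ} (hgap : ε ≤ G.lam1 Z p)
    {f : G.V → Z} (hf : ¬ ∀ v w, f v = f w) :
    2 * ε * G.Vn p f ≤ G.En p f := by
  have hmem : G.En p f / G.Vn p f ∈ G.ratioSet Z p := ⟨f, hf, rfl⟩
  have h1 : sInf (G.ratioSet Z p) ≤ G.En p f / G.Vn p f :=
    csInf_le (G.ratioSet_bddBelow p) hmem
  rw [lam1_eq] at hgap
  have h2 : 2 * ε ≤ G.En p f / G.Vn p f := by linarith
  have hV := G.Vn_pos p f hf
  calc 2 * ε * G.Vn p f ≤ (G.En p f / G.Vn p f) * G.Vn p f :=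
        mul_le_mul_of_nonneg_right h2 hV.le
    _ = G.En p f := by field_simp

lemma exists_nonconst_of_gap {G : MultiGraph} {p ε : ℝ} (hε : 0 < ε)
    (hgap : ε ≤ G.lam1 Z p) : ∃ f : G.V → Z, ¬ ∀ v w, f v = f w := by
  by_contra h
  push_neg at h
  have hempty : G.ratioSet Z p = ∅ := by
    ext r
    simp only [ratioSet, Set.mem_setOf_eq, Set.mem_empty_iff_false, iff_false]
    rintro ⟨f, hf, -⟩
    exact hf (h f)
  rw [lam1_eq, hempty, Real.sInf_empty, mul_zero] at hgap
  linarith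

lemma lam1_ge {G : MultiGraph} {p c : ℝ} (hS : (G.ratioSet Z p).Nonempty)
    (h : ∀ r ∈ G.ratioSet Z p, c ≤ r) : c / 2 ≤ G.lam1 Z p := by
  rw [lam1_eq]
  have := le_csInf hS h
  linarith

lemma mean_sub_const (G : MultiGraph) (f : G.V → Z) (c : Z) [Nonempty G.V] :
    G.mean (fun v => f v - c) = G.mean f - c := by
  have hcard : (0:ℝ) < (Fintype.card G.V : ℝ) := by
    exact_mod_cast Fintype.card_pos
  unfold mean
  rw [Finset.sum_sub_distrib, Finset.sum_const, smul_sub, Finset.card_univ]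
  congr 1
  rw [← Nat.cast_smul_eq_nsmul ℝ, smul_smul, inv_mul_cancel₀ (ne_of_gt hcard), one_smul]

end MultiGraph

-- crude rpow inequality
lemma add_rpow_le {p a b : ℝ} (hp : 1 ≤ p) (ha : 0 ≤ a) (hb : 0 ≤ b) :
    (a + b) ^ p ≤ (2:ℝ) ^ p * (a ^ p + b ^ p) := by
  have hp0 : (0:ℝ) ≤ p := le_trans zero_le_one hp
  have hmax : a + b ≤ 2 * max a b := by
    rcases le_total a b with h | h
    · rw [max_eq_right h]; linarith
    · rw [max_eq_left h]; linarith
  calc (a + b) ^ p ≤ (2 * max a b) ^ p :=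
        Real.rpow_le_rpow (add_nonneg ha hb) hmax hp0
    _ = (2:ℝ) ^ p * (max a b) ^ p := Real.mul_rpow (by norm_num) (le_max_of_le_left ha)
    _ ≤ (2:ℝ) ^ p * (a ^ p + b ^ p) := by
        apply mul_le_mul_of_nonneg_left _ (Real.rpow_nonneg (by norm_num) p)
        rcases le_total a b with h | h
        · rw [max_eq_right h]
          exact le_add_of_nonneg_left (Real.rpow_nonneg ha p)
        · rw [max_eq_left h]
          exact le_add_of_nonneg_right (Real.rpow_nonneg hb p)

end Helpers

section Transfer

variable {X Y : Type*} [NormedAddCommGroup X] [NormedSpace ℝ X]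
  [NormedAddCommGroup Y] [NormedSpace ℝ Y]

lemma transfer_gap (φ : Metric.sphere (0:X) 1 ≃ Metric.sphere (0:Y) 1)
    (hφ : UniformContinuous (φ : Metric.sphere (0:X) 1 → Metric.sphere (0:Y) 1))
    (hφ' : UniformContinuous (φ.symm : Metric.sphere (0:Y) 1 → Metric.sphere (0:X) 1))
    {p ε : ℝ} (hp : 1 ≤ p) (hε : 0 < ε) (D : ℕ) :
    ∃ ε' : ℝ, 0 < ε' ∧ ∀ G : MultiGraph, G.maxDeg ≤ D → ε ≤ G.lam1 Y p →
      ε' ≤ G.lam1 X p := by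
  classical
  have hp0 : (0:ℝ) ≤ p := le_trans zero_le_one hp
  set B : ℝ := (2:ℝ) ^ p with hB
  have hB1 : (1:ℝ) ≤ B := by
    rw [hB]
    calc (1:ℝ) = (1:ℝ) ^ p := (Real.one_rpow p).symm
      _ ≤ (2:ℝ) ^ p := Real.rpow_le_rpow zero_le_one one_le_two hp0
  have hBpos : (0:ℝ) < B := lt_of_lt_of_le one_pos hB1
  set D' : ℝ := (D:ℝ) + 1 with hD'
  have hD'pos : (0:ℝ) < D' := by positivity
  have hDD' : (D:ℝ) ≤ D' := by simp [hD']
  -- choose δ'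
  set δ' : ℝ := min 1 (1/(8*B^2)) with hδ'def
  have hδ'pos : 0 < δ' := lt_min one_pos (by positivity)
  have hδ'p : δ' ^ p ≤ 1/(8*B^2) := by
    calc δ' ^ p ≤ δ' ^ (1:ℝ) :=
          Real.rpow_le_rpow_of_exponent_ge hδ'pos (min_le_left _ _) hp
      _ = δ' := Real.rpow_one δ'
      _ ≤ 1/(8*B^2) := min_le_right _ _
  obtain ⟨C', hC'1, hC'⟩ := radExt_bound
    (φ.symm : Metric.sphere (0:Y) 1 → Metric.sphere (0:X) 1) hφ' hδ'pos
  have hC'pos : (0:ℝ) < C' := lt_of_lt_of_le one_pos hC'1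
  have hC'ppos : (0:ℝ) < C' ^ p := Real.rpow_pos_of_pos hC'pos p
  -- choose δ
  set δ : ℝ := min 1 (ε/(4*B^3*C'^p*D')) with hδdef
  have hδpos : 0 < δ := lt_min one_pos (by positivity)
  have hδp : δ ^ p ≤ ε/(4*B^3*C'^p*D') := by
    calc δ ^ p ≤ δ ^ (1:ℝ) :=
          Real.rpow_le_rpow_of_exponent_ge hδpos (min_le_left _ _) hp
      _ = δ := Real.rpow_one δ
      _ ≤ ε/(4*B^3*C'^p*D') := min_le_right _ _
  obtain ⟨C, hC1, hC⟩ := radExt_bound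
    (φ : Metric.sphere (0:X) 1 → Metric.sphere (0:Y) 1) hφ hδpos
  have hCpos : (0:ℝ) < C := lt_of_lt_of_le one_pos hC1
  have hCppos : (0:ℝ) < C ^ p := Real.rpow_pos_of_pos hCpos p
  set K : ℝ := 2 * (B^3*C'^p*C^p/ε) with hK
  have hKpos : 0 < K := by positivity
  refine ⟨1/(2*K), by positivity, ?_⟩
  intro G hdeg hgap
  -- the key estimate
  have key : ∀ f : G.V → X, (¬ ∀ v w, f v = f w) → G.Vn p f ≤ K * G.En p f := by
    intro f hf
    have hex : ∃ v w, f v ≠ f w := by push_neg at hf; exact hf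
    obtain ⟨v0, w0, hvw0⟩ := hex
    haveI : Nonempty G.V := ⟨v0⟩
    set c : X := G.mean f with hc
    set g : G.V → X := fun v => f v - c with hg
    have hgnc : ¬ ∀ v w, g v = g w := by
      intro hall
      apply hf
      intro v w
      have := hall v w
      simpa [hg, sub_left_inj] using this
    have hmg : G.mean g = 0 := by
      rw [hg, MultiGraph.mean_sub_const, hc, sub_self]
    have hEg : G.En p g = G.En p f := by
      unfold MultiGraph.En
      apply Finset.sum_congr rfl; intro v _
      apply Finset.sum_congr rfl; intro w _
      rw [hg]
      simp only [sub_sub_sub_cancel_right]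
    have hVg : G.Vn p f = ∑ v, ‖g v‖ ^ p := by
      unfold MultiGraph.Vn
      apply Finset.sum_congr rfl; intro v _
      rw [hg, hc]
    set T : ℝ := ∑ v, ‖g v‖ ^ p with hT
    have hTnonneg : 0 ≤ T :=
      Finset.sum_nonneg fun v _ => Real.rpow_nonneg (norm_nonneg _) _
    set N : ℝ := (Fintype.card G.V : ℝ) with hN
    have hNpos : 0 < N := by
      rw [hN]; exact_mod_cast Fintype.card_pos
    set Φ : X → Y := radExt (φ : Metric.sphere (0:X) 1 → Metric.sphere (0:Y) 1) with hΦ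
    set Ψ : Y → X := radExt (φ.symm : Metric.sphere (0:Y) 1 → Metric.sphere (0:X) 1) with hΨ
    have hΨΦ : ∀ x : X, Ψ (Φ x) = x := fun x => radExt_leftInverse φ x
    set gY : G.V → Y := fun v => Φ (g v) with hgY
    have hgYnc : ¬ ∀ v w, gY v = gY w := by
      intro hall
      apply hgnc
      intro v w
      have h := congrArg Ψ (hall v w)
      rwa [hgY, hΨΦ, hΨΦ] at h
    set yb : Y := G.mean gY with hyb
    set xs : X := Ψ yb with hxs
    set VY : ℝ := G.Vn p gY with hVY
    set EY : ℝ := G.En p gY with hEY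
    set E : ℝ := G.En p g with hE
    have hEnonneg : 0 ≤ E := G.En_nonneg p g
    have hVYnonneg : 0 ≤ VY := G.Vn_nonneg p gY
    -- h3 : gap on Y
    have h3 : 2 * ε * VY ≤ EY := MultiGraph.gap_ratio hgap hgYnc
    -- h4 : EY ≤ B*C^p*E + B*δ^p*(D'*T)
    have hterm4 : ∀ v w : G.V, ‖gY w - gY v‖ ^ p ≤
        B * (C^p * ‖g w - g v‖^p + δ^p * (min ‖g w‖ ‖g v‖)^p) := by
      intro v w
      have hmin0 : (0:ℝ) ≤ min ‖g w‖ ‖g v‖ := le_min (norm_nonneg _) (norm_nonneg _)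
      calc ‖gY w - gY v‖ ^ p
          ≤ (C * ‖g w - g v‖ + δ * min ‖g w‖ ‖g v‖) ^ p := by
            apply Real.rpow_le_rpow (norm_nonneg _) _ hp0
            exact hC (g w) (g v)
        _ ≤ B * ((C * ‖g w - g v‖)^p + (δ * min ‖g w‖ ‖g v‖)^p) := by
            rw [hB]
            exact add_rpow_le hp (mul_nonneg hCpos.le (norm_nonneg _))
              (mul_nonneg hδpos.le hmin0)
        _ = B * (C^p * ‖g w - g v‖^p + δ^p * (min ‖g w‖ ‖g v‖)^p) := by
            rw [Real.mul_rpow hCpos.le (norm_nonneg _), Real.mul_rpow hδpos.le hmin0]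
    have h4 : EY ≤ B*C^p*E + B*δ^p*(D'*T) := by
      have hstep : EY ≤ ∑ v, ∑ w, (G.m v w : ℝ) *
          (B * (C^p * ‖g w - g v‖^p + δ^p * (min ‖g w‖ ‖g v‖)^p)) := by
        rw [hEY]
        unfold MultiGraph.En
        apply Finset.sum_le_sum; intro v _
        apply Finset.sum_le_sum; intro w _
        exact mul_le_mul_of_nonneg_left (hterm4 v w) (Nat.cast_nonneg _)
      have hsplit : ∑ v, ∑ w, (G.m v w : ℝ) *
          (B * (C^p * ‖g w - g v‖^p + δ^p * (min ‖g w‖ ‖g v‖)^p))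
          = B*C^p*E + B*δ^p*(∑ v, ∑ w, (G.m v w:ℝ) * (min ‖g w‖ ‖g v‖)^p) := by
        rw [hE]
        unfold MultiGraph.En
        rw [Finset.mul_sum, Finset.mul_sum, ← Finset.sum_add_distrib]
        apply Finset.sum_congr rfl; intro v _
        rw [Finset.mul_sum, Finset.mul_sum, ← Finset.sum_add_distrib]
        apply Finset.sum_congr rfl; intro w _
        ring
      have hedge : ∑ v, ∑ w, (G.m v w:ℝ) * (min ‖g w‖ ‖g v‖)^p ≤ D' * T := by
        calc ∑ v, ∑ w, (G.m v w:ℝ) * (min ‖g w‖ ‖g v‖)^p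
            ≤ ∑ v, ∑ w, (G.m v w:ℝ) * ‖g v‖^p := by
              apply Finset.sum_le_sum; intro v _
              apply Finset.sum_le_sum; intro w _
              apply mul_le_mul_of_nonneg_left _ (Nat.cast_nonneg _)
              exact Real.rpow_le_rpow (le_min (norm_nonneg _) (norm_nonneg _))
                (min_le_right _ _) hp0
          _ = ∑ v, (G.deg v : ℝ) * ‖g v‖^p := by
              apply Finset.sum_congr rfl; intro v _
              rw [← Finset.sum_mul]
              congr 1
              rw [MultiGraph.deg]
              push_cast
              rfl
          _ ≤ ∑ v, D' * ‖g v‖^p := by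
              apply Finset.sum_le_sum; intro v _
              apply mul_le_mul_of_nonneg_right _ (Real.rpow_nonneg (norm_nonneg _) _)
              have h1 : G.deg v ≤ G.maxDeg := Finset.le_sup (Finset.mem_univ v)
              have h2 : G.deg v ≤ D := le_trans h1 hdeg
              calc (G.deg v : ℝ) ≤ (D:ℝ) := by exact_mod_cast h2
                _ ≤ D' := hDD'
          _ = D' * T := by rw [hT, Finset.mul_sum]
      calc EY ≤ _ := hstep
        _ = B*C^p*E + B*δ^p*(∑ v, ∑ w, (G.m v w:ℝ) * (min ‖g w‖ ‖g v‖)^p) := hsplit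
        _ ≤ B*C^p*E + B*δ^p*(D'*T) := by
            apply add_le_add le_rfl
            exact mul_le_mul_of_nonneg_left hedge (by positivity)
    -- h2 : T' bound
    set T' : ℝ := ∑ v, ‖g v - xs‖^p with hT'
    have hT'nonneg : 0 ≤ T' :=
      Finset.sum_nonneg fun v _ => Real.rpow_nonneg (norm_nonneg _) _
    have hterm2 : ∀ v : G.V, ‖g v - xs‖^p ≤
        B*(C'^p*‖gY v - yb‖^p + δ'^p*‖g v‖^p) := by
      intro v
      have hrw : g v - xs = Ψ (gY v) - Ψ yb := by
        rw [hxs, hgY]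
        simp only []
        rw [hΨΦ (g v)]
      have hminle : min ‖gY v‖ ‖yb‖ ≤ ‖g v‖ := by
        calc min ‖gY v‖ ‖yb‖ ≤ ‖gY v‖ := min_le_left _ _
          _ = ‖g v‖ := by rw [hgY]; exact norm_radExt _ _
      have hle : ‖g v - xs‖ ≤ C'*‖gY v - yb‖ + δ'*‖g v‖ := by
        rw [hrw]
        refine le_trans (hC' (gY v) yb) ?_
        apply add_le_add le_rfl
        exact mul_le_mul_of_nonneg_left hminle hδ'pos.le
      calc ‖g v - xs‖^p ≤ (C'*‖gY v - yb‖ + δ'*‖g v‖)^p :=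
            Real.rpow_le_rpow (norm_nonneg _) hle hp0
        _ ≤ B*((C'*‖gY v - yb‖)^p + (δ'*‖g v‖)^p) := by
            rw [hB]
            exact add_rpow_le hp (mul_nonneg hC'pos.le (norm_nonneg _))
              (mul_nonneg hδ'pos.le (norm_nonneg _))
        _ = B*(C'^p*‖gY v - yb‖^p + δ'^p*‖g v‖^p) := by
            rw [Real.mul_rpow hC'pos.le (norm_nonneg _),
              Real.mul_rpow hδ'pos.le (norm_nonneg _)]
    have h2 : T' ≤ B*C'^p*VY + B*δ'^p*T := by
      calc T' ≤ ∑ v, B*(C'^p*‖gY v - yb‖^p + δ'^p*‖g v‖^p) :=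
            Finset.sum_le_sum fun v _ => hterm2 v
        _ = B*C'^p*(∑ v, ‖gY v - yb‖^p) + B*δ'^p*T := by
            rw [hT, Finset.mul_sum, Finset.mul_sum, ← Finset.sum_add_distrib]
            apply Finset.sum_congr rfl; intro v _
            ring
        _ = B*C'^p*VY + B*δ'^p*T := by
            rw [hVY]
            unfold MultiGraph.Vn
            rfl
    -- h1 : T ≤ B*(T' + T')
    have hsumg : ∑ v, g v = 0 := by
      have h := hmg
      unfold MultiGraph.mean at h
      rcases smul_eq_zero.mp h with h' | h'
      · exact absurd h' (by
          rw [hN] at hNpos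
          exact inv_ne_zero (ne_of_gt (by exact_mod_cast hNpos)))
      · exact h'
    have hxsb : N * ‖xs‖^p ≤ T' := by
      have hsum : ∑ v, (g v - xs) = -((Fintype.card G.V : ℝ) • xs) := by
        rw [Finset.sum_sub_distrib, hsumg, Finset.sum_const, Finset.card_univ, zero_sub,
          Nat.cast_smul_eq_nsmul]
      have hnorm1 : N * ‖xs‖ ≤ ∑ v, ‖g v - xs‖ := by
        have h1 : ‖∑ v, (g v - xs)‖ = N * ‖xs‖ := by
          rw [hsum, norm_neg, norm_smul, Real.norm_eq_abs, abs_of_pos (by exact_mod_cast Fintype.card_pos : (0:ℝ) < (Fintype.card G.V : ℝ)), hN]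
        rw [← h1]
        exact norm_sum_le _ _
      have hxsn : ‖xs‖ ≤ (∑ v, ‖g v - xs‖) / N := by
        rw [le_div_iff₀ hNpos]
        linarith
      have hp1 : ‖xs‖^p ≤ ((∑ v, ‖g v - xs‖) / N)^p :=
        Real.rpow_le_rpow (norm_nonneg _) hxsn hp0
      have hp2 : ((∑ v, ‖g v - xs‖) / N)^p
          = (∑ v, ‖g v - xs‖)^p / N^p := by
        rw [Real.div_rpow (Finset.sum_nonneg fun v _ => norm_nonneg _) hNpos.le]
      have hp3 : (∑ v, ‖g v - xs‖)^p ≤ N^(p-1) * T' := by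
        have := Real.rpow_sum_le_const_mul_sum_rpow_of_nonneg (s := Finset.univ)
          (f := fun v => ‖g v - xs‖) hp (fun i _ => norm_nonneg _)
        rw [Finset.card_univ] at this
        rw [hT', hN]
        exact this
      have hNppos : (0:ℝ) < N^p := Real.rpow_pos_of_pos hNpos p
      have hNp1 : N^(p-1) = N^p / N := by
        rw [Real.rpow_sub hNpos, Real.rpow_one]
      calc N * ‖xs‖^p ≤ N * ((∑ v, ‖g v - xs‖)^p / N^p) := by
            apply mul_le_mul_of_nonneg_left _ hNpos.le
            rw [← hp2]; exact hp1
        _ ≤ N * ((N^(p-1) * T') / N^p) := by gcongr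
        _ = T' := by
            rw [hNp1]
            field_simp
    -- h1
    have hterm1 : ∀ v : G.V, ‖g v‖^p ≤ B*(‖g v - xs‖^p + ‖xs‖^p) := by
      intro v
      have h1 : ‖g v‖ ≤ ‖g v - xs‖ + ‖xs‖ := by
        calc ‖g v‖ = ‖(g v - xs) + xs‖ := by rw [sub_add_cancel]
          _ ≤ ‖g v - xs‖ + ‖xs‖ := norm_add_le _ _
      calc ‖g v‖^p ≤ (‖g v - xs‖ + ‖xs‖)^p :=
            Real.rpow_le_rpow (norm_nonneg _) h1 hp0
        _ ≤ B*(‖g v - xs‖^p + ‖xs‖^p) := by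
            rw [hB]
            exact add_rpow_le hp (norm_nonneg _) (norm_nonneg _)
    have h1 : T ≤ B*(T' + T') := by
      calc T ≤ ∑ v, B*(‖g v - xs‖^p + ‖xs‖^p) :=
            Finset.sum_le_sum fun v _ => hterm1 v
        _ = B*(T' + N*‖xs‖^p) := by
            simp only [mul_add]
            rw [Finset.sum_add_distrib, ← Finset.mul_sum, ← hT',
              Finset.sum_const, Finset.card_univ, nsmul_eq_mul, ← hN]
            ring
        _ ≤ B*(T' + T') := by
            apply mul_le_mul_of_nonneg_left _ hBpos.le
            linarith [hxsb]
    -- combine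
    have hVYb : VY ≤ EY / (2*ε) := by
      rw [le_div_iff₀ (by positivity)]
      linarith [h3]
    have t1 : T ≤ 2*B*T' := by
      have hring : B*(T'+T') = 2*B*T' := by ring
      linarith [h1]
    have t2 : T ≤ 2*B*(B*C'^p*VY + B*δ'^p*T) := by
      refine le_trans t1 ?_
      have := mul_le_mul_of_nonneg_left h2 (by positivity : (0:ℝ) ≤ 2*B)
      linarith [this]
    have t3 : VY ≤ (B*C^p*E + B*δ^p*(D'*T)) / (2*ε) := by
      refine le_trans hVYb ?_
      gcongr
    have t4 : T ≤ 2*B*(B*C'^p*((B*C^p*E + B*δ^p*(D'*T))/(2*ε)) + B*δ'^p*T) := by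
      refine le_trans t2 ?_
      gcongr
    have talg : 2*B*(B*C'^p*((B*C^p*E + B*δ^p*(D'*T))/(2*ε)) + B*δ'^p*T)
        = (B^3*C'^p*C^p/ε)*E + (B^3*C'^p*δ^p*D'/ε)*T + (2*B^2*δ'^p)*T := by
      field_simp
    have c1 : B^3*C'^p*δ^p*D'/ε ≤ 1/4 := by
      calc B^3*C'^p*δ^p*D'/ε ≤ B^3*C'^p*(ε/(4*B^3*C'^p*D'))*D'/ε := by gcongr
        _ = 1/4 := by field_simp
    have c2 : 2*B^2*δ'^p ≤ 1/4 := by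
      calc 2*B^2*δ'^p ≤ 2*B^2*(1/(8*B^2)) := by gcongr
        _ = 1/4 := by field_simp; ring
    have final : T ≤ K * E := by
      have e1 : (B^3*C'^p*δ^p*D'/ε)*T ≤ (1/4)*T := mul_le_mul_of_nonneg_right c1 hTnonneg
      have e2 : (2*B^2*δ'^p)*T ≤ (1/4)*T := mul_le_mul_of_nonneg_right c2 hTnonneg
      have t5 := t4
      rw [talg] at t5
      rw [hK]
      linarith
    have hVnT : G.Vn p f = T := hVg
    have hEnE : G.En p f = E := hEg.symm
    rw [hVnT, hEnE]
    exact final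
  -- build a nonconstant X-valued map, so the ratio set is nonempty
  obtain ⟨h0, hh0⟩ := MultiGraph.exists_nonconst_of_gap (Z := Y) hε hgap
  have hex0 : ∃ v w, h0 v ≠ h0 w := by push_neg at hh0; exact hh0
  obtain ⟨va, wa, hvw⟩ := hex0
  have hy : h0 va - h0 wa ≠ 0 := sub_ne_zero.mpr hvw
  set b : Metric.sphere (0:Y) 1 :=
    ⟨‖h0 va - h0 wa‖⁻¹ • (h0 va - h0 wa), mem_unit_sphere_of_ne_zero hy⟩ with hb
  set x0 : X := ((φ.symm b : Metric.sphere (0:X) 1) : X) with hx0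
  have hx0n : ‖x0‖ = 1 := norm_coe_sphere _
  have hvawa : va ≠ wa := fun h => hvw (by rw [h])
  set f0 : G.V → X := fun u => if u = va then x0 else 0 with hf0
  have hf0nc : ¬ ∀ v w, f0 v = f0 w := by
    intro hall
    have h := hall va wa
    simp only [hf0, if_pos, if_neg (Ne.symm hvawa)] at h
    rw [h, norm_zero] at hx0n
    exact one_ne_zero hx0n.symm
  have hSne : (G.ratioSet X p).Nonempty := ⟨_, f0, hf0nc, rfl⟩
  have hall : ∀ r ∈ G.ratioSet X p, 1/K ≤ r := by
    rintro r ⟨f, hfnc, rfl⟩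
    have hkey := key f hfnc
    have hV := G.Vn_pos p f hfnc
    rw [le_div_iff₀ hV]
    calc 1/K * G.Vn p f ≤ 1/K * (K * G.En p f) := by
          apply mul_le_mul_of_nonneg_left hkey (by positivity)
      _ = G.En p f := by field_simp
  have hfin := MultiGraph.lam1_ge hSne hall
  calc 1/(2*K) = (1/K)/2 := by ring
    _ ≤ G.lam1 X p := hfin

end Transfer

theorem banach_spectral_gap_sphere_equivalence
    (X Y : Type*) [NormedAddCommGroup X] [NormedSpace ℝ X] [CompleteSpace X]
    [NormedAddCommGroup Y] [NormedSpace ℝ Y] [CompleteSpace Y]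
    (hXY : SphereEquiv X Y) (p : ℝ) (hp : 1 ≤ p)
    (G : ℕ → MultiGraph) (hconn : ∀ n, (G n).Connected) :
    IsAnderFamily G X p ↔ IsAnderFamily G Y p := by
  obtain ⟨φ, h1, h2⟩ := hXY
  constructor
  · rintro ⟨⟨D, hD⟩, hdiam, ε, hε, hgap⟩
    have h1' : UniformContinuous
        (φ.symm.symm : Metric.sphere (0:X) 1 → Metric.sphere (0:Y) 1) := by
      rw [Equiv.symm_symm]; exact h1
    obtain ⟨ε', hε', htrans⟩ := transfer_gap φ.symm h2 h1' hp hε D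
    exact ⟨⟨D, hD⟩, hdiam, ε', hε', fun n => htrans (G n) (hD n) (hgap n)⟩
  · rintro ⟨⟨D, hD⟩, hdiam, ε, hε, hgap⟩
    obtain ⟨ε', hε', htrans⟩ := transfer_gap φ h1 h2 hp hε D
    exact ⟨⟨D, hD⟩, hdiam, ε', hε', fun n => htrans (G n) (hD n) (hgap n)⟩
end

section
/- (Generalized Grigorchuk–Nowak inequality) Let G=(V,E) be a finite connected graph, X a real Banach space, p ∈ [1,∞), and ε ∈ (0,1). Then c_X(G) ≥ ((1−ε)^{1/p}·r_ε(G)/2)·diam(G)·(λ₁(G;X,p)/Δ(G))^{1/p}, where r_ε(G) := inf{diam(A)/diam(G) : A ⊆ V, |A| ≥ ε|V|}. -/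
open scoped ENNReal

/-- Diameter of a subset `A` of the vertex set, w.r.t. the path metric. -/
noncomputable def MultiGraph.subsetDiam (G : MultiGraph) (A : Finset G.V) : ℕ :=
  (A ×ˢ A).sup fun q => G.dist q.1 q.2

/-- `r_ε(G) = inf {diam(A)/diam(G) : |A| ≥ ε|V|}`. -/
noncomputable def MultiGraph.rEps (G : MultiGraph) (ε : ℝ) : ℝ :=
  sInf {r : ℝ | ∃ A : Finset G.V, ε * (Fintype.card G.V : ℝ) ≤ (A.card : ℝ) ∧
    r = (G.subsetDiam A : ℝ) / (G.diam : ℝ)}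

theorem generalized_grigorchuk_nowak
    (G : MultiGraph) (hG : G.Connected)
    (X : Type*) [NormedAddCommGroup X] [NormedSpace ℝ X] [CompleteSpace X]
    (p : ℝ) (hp : 1 ≤ p) (ε : ℝ) (hε : ε ∈ Set.Ioo (0:ℝ) 1) :
    ((1 - ε) ^ (1/p) * G.rEps ε / 2) * (G.diam : ℝ) *
      (G.lam1 X p / (G.maxDeg : ℝ)) ^ (1/p) ≤ G.distortion X := by
  classical
  obtain ⟨hε0, hε1⟩ := hε
  have hε1' : (0:ℝ) < 1 - ε := by linarith
  have hp0 : (0:ℝ) < p := lt_of_lt_of_le one_pos hp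
  have hip : (0:ℝ) ≤ 1/p := by positivity
  have hipne : (1:ℝ)/p ≠ 0 := by positivity
  -- distortion is nonnegative
  have hdistnn : 0 ≤ G.distortion X := by
    apply Real.sInf_nonneg
    rintro c ⟨f, L₁, L₂, h1, h2, -, -, rfl⟩
    positivity
  -- lam1 is nonnegative
  have hlam1def : G.lam1 X p = (1/2) * sInf {r : ℝ | ∃ f : G.V → X, (¬ ∀ v w, f v = f w) ∧
      r = (∑ v, ∑ w, (G.m v w : ℝ) * ‖f w - f v‖ ^ p) / (∑ v, ‖f v - G.mean f‖ ^ p)} := rfl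
  have hslnn : ∀ r ∈ {r : ℝ | ∃ f : G.V → X, (¬ ∀ v w, f v = f w) ∧
      r = (∑ v, ∑ w, (G.m v w : ℝ) * ‖f w - f v‖ ^ p) / (∑ v, ‖f v - G.mean f‖ ^ p)}, 0 ≤ r := by
    rintro r ⟨f, -, rfl⟩
    apply div_nonneg
    · apply Finset.sum_nonneg; intro v _; apply Finset.sum_nonneg; intro w _; positivity
    · apply Finset.sum_nonneg; intro v _; positivity
  have hl1nn : 0 ≤ G.lam1 X p := by
    rw [hlam1def]
    have := Real.sInf_nonneg hslnn
    linarith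
  by_cases hlam : G.lam1 X p ≤ 0
  · have h0 : G.lam1 X p = 0 := le_antisymm hlam hl1nn
    rw [h0, zero_div, Real.zero_rpow hipne, mul_zero]
    exact hdistnn
  push_neg at hlam
  -- the lam1 set is nonempty, giving a nonconstant map and two distinct vertices
  have hslne : {r : ℝ | ∃ f : G.V → X, (¬ ∀ v w, f v = f w) ∧
      r = (∑ v, ∑ w, (G.m v w : ℝ) * ‖f w - f v‖ ^ p) / (∑ v, ‖f v - G.mean f‖ ^ p)}.Nonempty := by
    by_contra hne
    rw [Set.not_nonempty_iff_eq_empty] at hne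
    rw [hlam1def, hne, Real.sInf_empty, mul_zero] at hlam
    exact lt_irrefl 0 hlam
  obtain ⟨r₀, g, hgnc, -⟩ := hslne
  push_neg at hgnc
  obtain ⟨v₀, w₀, hgvw⟩ := hgnc
  have hne0 : v₀ ≠ w₀ := fun h => hgvw (by rw [h])
  -- diameter is positive
  have hdistpos : 0 < G.dist v₀ w₀ := hG.pos_dist_of_ne hne0
  have hdiamN : 0 < G.diam := lt_of_lt_of_le hdistpos
    (Finset.le_sup (f := fun q : G.V × G.V => G.dist q.1 q.2) (Finset.mem_univ (v₀, w₀)))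
  have hdiam : (0:ℝ) < (G.diam : ℝ) := by exact_mod_cast hdiamN
  -- max degree is positive
  have hDeg : (0:ℝ) < (G.maxDeg : ℝ) := by
    obtain ⟨W⟩ := hG.preconnected v₀ w₀
    have hΔ : 0 < G.maxDeg := by
      cases W with
      | nil => exact absurd rfl hne0
      | @cons _ u _ h q =>
        have hm : 0 < G.m v₀ u := (show v₀ ≠ u ∧ 0 < G.m v₀ u from h).2
        have hdeg : 0 < G.deg v₀ :=
          lt_of_lt_of_le hm (Finset.single_le_sum (f := fun w => G.m v₀ w)
            (fun _ _ => Nat.zero_le _) (Finset.mem_univ u))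
        exact lt_of_lt_of_le hdeg (Finset.le_sup (f := fun v => G.deg v) (Finset.mem_univ v₀))
    exact_mod_cast hΔ
  set n := Fintype.card G.V with hn
  have hnpos : (0:ℝ) < (n:ℝ) := by
    have : 0 < n := Fintype.card_pos_iff.mpr ⟨v₀⟩
    exact_mod_cast this
  -- the distortion set is nonempty
  have hDne : {c : ℝ | ∃ (f : G.V → X) (L₁ L₂ : ℝ), 0 < L₁ ∧ 0 < L₂ ∧
      (∀ v w, ‖f v - f w‖ ≤ L₁ * (G.dist v w : ℝ)) ∧
      (∀ v w, (G.dist v w : ℝ) ≤ L₂ * ‖f v - f w‖) ∧ c = L₁ * L₂}.Nonempty := by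
    set x : X := g v₀ - g w₀ with hx
    have hxne : x ≠ 0 := sub_ne_zero.mpr hgvw
    have hxn : 0 < ‖x‖ := norm_pos_iff.mpr hxne
    set e := Fintype.equivFin G.V with he
    set f₀ : G.V → X := fun v => (((e v : ℕ) : ℝ)) • x with hf₀
    have hnorm : ∀ v w, ‖f₀ v - f₀ w‖ = |((e v : ℕ) : ℝ) - ((e w : ℕ) : ℝ)| * ‖x‖ := by
      intro v w
      rw [hf₀]
      simp only []
      rw [← sub_smul, norm_smul, Real.norm_eq_abs]
    refine ⟨(n * ‖x‖) * (((G.diam : ℝ) + 1) / ‖x‖), f₀, n * ‖x‖, ((G.diam : ℝ) + 1) / ‖x‖,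
      by positivity, by positivity, ?_, ?_, rfl⟩
    · intro v w
      by_cases hvw : v = w
      · subst hvw; simp; positivity
      · have hd1 : (1:ℝ) ≤ (G.dist v w : ℝ) := by
          exact_mod_cast hG.pos_dist_of_ne hvw
        have h1 : ((e v : ℕ) : ℝ) < n := by exact_mod_cast (e v).2
        have h2 : ((e w : ℕ) : ℝ) < n := by exact_mod_cast (e w).2
        have h3 : (0:ℝ) ≤ ((e v : ℕ) : ℝ) := by positivity
        have h4 : (0:ℝ) ≤ ((e w : ℕ) : ℝ) := by positivity
        have habs : |((e v : ℕ) : ℝ) - ((e w : ℕ) : ℝ)| ≤ n :=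
          abs_sub_le_iff.mpr ⟨by linarith, by linarith⟩
        rw [hnorm]
        calc |((e v : ℕ) : ℝ) - ((e w : ℕ) : ℝ)| * ‖x‖ ≤ (n : ℝ) * ‖x‖ := by
              exact mul_le_mul_of_nonneg_right habs (norm_nonneg x)
          _ = (n : ℝ) * ‖x‖ * 1 := by ring
          _ ≤ (n : ℝ) * ‖x‖ * (G.dist v w : ℝ) := by
              apply mul_le_mul_of_nonneg_left hd1; positivity
    · intro v w
      by_cases hvw : v = w
      · subst hvw
        simp [MultiGraph.dist, SimpleGraph.dist_self]
      · have hdle : (G.dist v w : ℝ) ≤ (G.diam : ℝ) := by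
          exact_mod_cast Finset.le_sup (f := fun q : G.V × G.V => G.dist q.1 q.2)
            (Finset.mem_univ (v, w))
        have heneq : ((e v : ℕ) : ℤ) ≠ ((e w : ℕ) : ℤ) := by
          intro h
          apply hvw
          apply e.injective
          apply Fin.ext
          exact_mod_cast h
        have habs1 : (1:ℝ) ≤ |((e v : ℕ) : ℝ) - ((e w : ℕ) : ℝ)| := by
          have h1 : (1:ℤ) ≤ |((e v : ℕ) : ℤ) - ((e w : ℕ) : ℤ)| :=
            Int.one_le_abs (sub_ne_zero.mpr heneq)
          have h2 : |(((e v : ℕ) : ℤ) - ((e w : ℕ) : ℤ) : ℤ)| = |((e v : ℕ) : ℝ) - ((e w : ℕ) : ℝ)| := by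
            push_cast [← Int.cast_abs]
            norm_num
          rw [← h2]
          exact_mod_cast h1
        rw [hnorm]
        calc (G.dist v w : ℝ) ≤ (G.diam : ℝ) + 1 := by linarith
          _ = ((G.diam : ℝ) + 1) / ‖x‖ * (1 * ‖x‖) := by
              field_simp
          _ ≤ ((G.diam : ℝ) + 1) / ‖x‖ * (|((e v : ℕ) : ℝ) - ((e w : ℕ) : ℝ)| * ‖x‖) := by
              apply mul_le_mul_of_nonneg_left _ (by positivity)
              exact mul_le_mul_of_nonneg_right habs1 (norm_nonneg x)
  -- main argument: bound against any element of the distortion set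
  apply le_csInf hDne
  rintro c ⟨f, L₁, L₂, hL₁, hL₂, hfup, hflow, rfl⟩
  set μ := G.mean f with hμ
  set S := ∑ v, ‖f v - μ‖ ^ p with hS
  set N := ∑ v, ∑ w, (G.m v w : ℝ) * ‖f w - f v‖ ^ p with hN
  -- f is nonconstant
  have hfnc : f v₀ ≠ f w₀ := by
    intro h
    have h1 : (G.dist v₀ w₀ : ℝ) ≤ L₂ * ‖f v₀ - f w₀‖ := hflow v₀ w₀
    rw [h, sub_self, norm_zero, mul_zero] at h1
    have : (0:ℝ) < (G.dist v₀ w₀ : ℝ) := by exact_mod_cast hdistpos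
    linarith
  -- S > 0
  have hSpos : 0 < S := by
    have : ∃ u, f u ≠ μ := by
      by_contra h
      push_neg at h
      exact hfnc ((h v₀).trans (h w₀).symm)
    obtain ⟨u, hu⟩ := this
    apply Finset.sum_pos' (fun v _ => by positivity)
    exact ⟨u, Finset.mem_univ u, Real.rpow_pos_of_pos (norm_pos_iff.mpr (sub_ne_zero.mpr hu)) p⟩
  -- 2 * lam1 * S ≤ N
  have hkey1 : 2 * G.lam1 X p * S ≤ N := by
    have hmem : N / S ∈ {r : ℝ | ∃ f : G.V → X, (¬ ∀ v w, f v = f w) ∧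
        r = (∑ v, ∑ w, (G.m v w : ℝ) * ‖f w - f v‖ ^ p) / (∑ v, ‖f v - G.mean f‖ ^ p)} := by
      refine ⟨f, ?_, rfl⟩
      intro h
      exact hfnc (h v₀ w₀)
    have hbdd : BddBelow {r : ℝ | ∃ f : G.V → X, (¬ ∀ v w, f v = f w) ∧
        r = (∑ v, ∑ w, (G.m v w : ℝ) * ‖f w - f v‖ ^ p) / (∑ v, ‖f v - G.mean f‖ ^ p)} :=
      ⟨0, hslnn⟩
    have h1 : sInf {r : ℝ | ∃ f : G.V → X, (¬ ∀ v w, f v = f w) ∧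
        r = (∑ v, ∑ w, (G.m v w : ℝ) * ‖f w - f v‖ ^ p) / (∑ v, ‖f v - G.mean f‖ ^ p)} ≤ N / S :=
      csInf_le hbdd hmem
    have h2 : 2 * G.lam1 X p ≤ N / S := by rw [hlam1def]; linarith
    calc 2 * G.lam1 X p * S ≤ (N / S) * S := mul_le_mul_of_nonneg_right h2 hSpos.le
      _ = N := div_mul_cancel₀ N hSpos.ne'
  -- N ≤ n * (Δ * L₁ ^ p)
  have hkey2 : N ≤ (n : ℝ) * ((G.maxDeg : ℝ) * L₁ ^ p) := by
    rw [hN]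
    calc ∑ v, ∑ w, (G.m v w : ℝ) * ‖f w - f v‖ ^ p
        ≤ ∑ v : G.V, (G.maxDeg : ℝ) * L₁ ^ p := by
          apply Finset.sum_le_sum
          intro v _
          calc ∑ w, (G.m v w : ℝ) * ‖f w - f v‖ ^ p ≤ ∑ w, (G.m v w : ℝ) * L₁ ^ p := by
                apply Finset.sum_le_sum
                intro w _
                by_cases hm : G.m v w = 0
                · simp [hm]
                · by_cases hvw : v = w
                  · subst hvw
                    rw [sub_self, norm_zero, Real.zero_rpow hp0.ne', mul_zero]
                    positivity
                  · have hadj : G.toSimple.Adj v w := show v ≠ w ∧ 0 < G.m v w from ⟨hvw, Nat.pos_of_ne_zero hm⟩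
                    have hd1 : G.dist v w ≤ 1 := by
                      have := SimpleGraph.dist_le hadj.toWalk
                      simpa [MultiGraph.dist] using this
                    have hnle : ‖f w - f v‖ ≤ L₁ := by
                      rw [norm_sub_rev]
                      calc ‖f v - f w‖ ≤ L₁ * (G.dist v w : ℝ) := hfup v w
                        _ ≤ L₁ * 1 := by
                            apply mul_le_mul_of_nonneg_left _ hL₁.le
                            exact_mod_cast hd1
                        _ = L₁ := mul_one L₁
                    have : ‖f w - f v‖ ^ p ≤ L₁ ^ p :=
                      Real.rpow_le_rpow (norm_nonneg _) hnle hp0.le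
                    apply mul_le_mul_of_nonneg_left this
                    positivity
            _ = (G.deg v : ℝ) * L₁ ^ p := by
                rw [← Finset.sum_mul, MultiGraph.deg]
                push_cast
                ring
            _ ≤ (G.maxDeg : ℝ) * L₁ ^ p := by
                apply mul_le_mul_of_nonneg_right _ (by positivity)
                exact_mod_cast Finset.le_sup (f := fun v => G.deg v) (Finset.mem_univ v)
      _ = (n : ℝ) * ((G.maxDeg : ℝ) * L₁ ^ p) := by
          rw [Finset.sum_const, Finset.card_univ, nsmul_eq_mul, hn]
  -- Markov-type bound on the set B
  set T := S / ((1 - ε) * n) with hT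
  have hTpos : 0 < T := by rw [hT]; positivity
  set B := Finset.univ.filter (fun v => ‖f v - μ‖ ^ p < T) with hB
  set A := Finset.univ.filter (fun v => ¬ (‖f v - μ‖ ^ p < T)) with hA
  have hcards : B.card + A.card = n := by
    have h := Finset.card_filter_add_card_filter_not
      (s := (Finset.univ : Finset G.V)) (p := fun v => ‖f v - μ‖ ^ p < T)
    rw [Finset.card_univ] at h
    rw [hB, hA]
    exact h
  have hAT : (A.card : ℝ) * T ≤ S := by
    calc (A.card : ℝ) * T = (A.card : ℕ) • T := by rw [nsmul_eq_mul]
      _ ≤ ∑ v ∈ A, ‖f v - μ‖ ^ p := by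
          apply Finset.card_nsmul_le_sum
          intro v hv
          rw [hA, Finset.mem_filter] at hv
          exact le_of_not_gt hv.2
      _ ≤ S := by
          rw [hS]
          apply Finset.sum_le_sum_of_subset_of_nonneg (Finset.subset_univ A)
          intro v _ _
          positivity
  have hAcard : (A.card : ℝ) ≤ (1 - ε) * n := by
    have hST : S = ((1 - ε) * n) * T := by
      rw [hT, mul_div_cancel₀]
      positivity
    rw [hST] at hAT
    exact le_of_mul_le_mul_right hAT hTpos
  have hBcard : ε * (n : ℝ) ≤ (B.card : ℝ) := by
    have : (B.card : ℝ) + (A.card : ℝ) = n := by exact_mod_cast hcards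
    linarith
  have hBne : B.Nonempty := by
    rw [← Finset.card_pos]
    have : (0:ℝ) < (B.card : ℝ) := lt_of_lt_of_le (by positivity) hBcard
    exact_mod_cast this
  -- bound on subset diameter of B
  have hnormB : ∀ v ∈ B, ‖f v - μ‖ ≤ T ^ (1/p) := by
    intro v hv
    rw [hB, Finset.mem_filter] at hv
    have h1 : ‖f v - μ‖ = (‖f v - μ‖ ^ p) ^ (1/p) := by
      rw [one_div, Real.rpow_rpow_inv (norm_nonneg _) hp0.ne']
    rw [h1]
    exact Real.rpow_le_rpow (by positivity) hv.2.le hip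
  have hsd : (G.subsetDiam B : ℝ) ≤ 2 * L₂ * T ^ (1/p) := by
    obtain ⟨q, hq, hsup⟩ := Finset.exists_mem_eq_sup (B ×ˢ B) (hBne.product hBne)
      (fun q => G.dist q.1 q.2)
    rw [Finset.mem_product] at hq
    have : (G.subsetDiam B : ℝ) = (G.dist q.1 q.2 : ℝ) := by
      rw [MultiGraph.subsetDiam, hsup]
    rw [this]
    calc (G.dist q.1 q.2 : ℝ) ≤ L₂ * ‖f q.1 - f q.2‖ := hflow q.1 q.2
      _ ≤ L₂ * (‖f q.1 - μ‖ + ‖f q.2 - μ‖) := by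
          apply mul_le_mul_of_nonneg_left _ hL₂.le
          calc ‖f q.1 - f q.2‖ = ‖(f q.1 - μ) - (f q.2 - μ)‖ := by
                rw [sub_sub_sub_cancel_right]
            _ ≤ ‖f q.1 - μ‖ + ‖f q.2 - μ‖ := norm_sub_le _ _
      _ ≤ L₂ * (T ^ (1/p) + T ^ (1/p)) := by
          apply mul_le_mul_of_nonneg_left _ hL₂.le
          exact add_le_add (hnormB q.1 hq.1) (hnormB q.2 hq.2)
      _ = 2 * L₂ * T ^ (1/p) := by ring
  -- rEps bound
  have hrd : G.rEps ε * (G.diam : ℝ) ≤ (G.subsetDiam B : ℝ) := by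
    have hmem : (G.subsetDiam B : ℝ) / (G.diam : ℝ) ∈ {r : ℝ | ∃ A : Finset G.V,
        ε * (Fintype.card G.V : ℝ) ≤ (A.card : ℝ) ∧
        r = (G.subsetDiam A : ℝ) / (G.diam : ℝ)} := ⟨B, by rw [← hn]; exact hBcard, rfl⟩
    have hbdd : BddBelow {r : ℝ | ∃ A : Finset G.V,
        ε * (Fintype.card G.V : ℝ) ≤ (A.card : ℝ) ∧
        r = (G.subsetDiam A : ℝ) / (G.diam : ℝ)} := by
      refine ⟨0, ?_⟩
      rintro r ⟨A', -, rfl⟩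
      positivity
    have h1 : G.rEps ε ≤ (G.subsetDiam B : ℝ) / (G.diam : ℝ) := csInf_le hbdd hmem
    calc G.rEps ε * (G.diam : ℝ) ≤ ((G.subsetDiam B : ℝ) / (G.diam : ℝ)) * (G.diam : ℝ) :=
          mul_le_mul_of_nonneg_right h1 hdiam.le
      _ = (G.subsetDiam B : ℝ) := div_mul_cancel₀ _ hdiam.ne'
  -- bound T
  set a := G.lam1 X p with ha
  set Δ := (G.maxDeg : ℝ) with hΔ'
  have hTle : T ≤ Δ * L₁ ^ p / (2 * a * (1 - ε)) := by
    have hSle : S ≤ (n : ℝ) * (Δ * L₁ ^ p) / (2 * a) := by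
      rw [le_div_iff₀ (by positivity)]
      calc S * (2 * a) = 2 * a * S := by ring
        _ ≤ N := hkey1
        _ ≤ (n : ℝ) * (Δ * L₁ ^ p) := hkey2
    have heq : ((n : ℝ) * (Δ * L₁ ^ p) / (2 * a)) / ((1 - ε) * n) =
        Δ * L₁ ^ p / (2 * a * (1 - ε)) := by
      field_simp
    rw [hT, ← heq]
    exact (div_le_div_iff_of_pos_right (by positivity)).mpr hSle
  -- final computation
  have hchain : G.rEps ε * (G.diam : ℝ) ≤ 2 * L₂ * (Δ * L₁ ^ p / (2 * a * (1 - ε))) ^ (1/p) := by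
    calc G.rEps ε * (G.diam : ℝ) ≤ (G.subsetDiam B : ℝ) := hrd
      _ ≤ 2 * L₂ * T ^ (1/p) := hsd
      _ ≤ 2 * L₂ * (Δ * L₁ ^ p / (2 * a * (1 - ε))) ^ (1/p) := by
          apply mul_le_mul_of_nonneg_left _ (by positivity)
          exact Real.rpow_le_rpow hTpos.le hTle hip
  set cc := (1 - ε) ^ (1/p) * (a / Δ) ^ (1/p) / 2 with hcc
  have hccnn : 0 ≤ cc := by rw [hcc]; positivity
  have hgoal_eq : ((1 - ε) ^ (1/p) * G.rEps ε / 2) * (G.diam : ℝ) * (a / Δ) ^ (1/p) =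
      cc * (G.rEps ε * (G.diam : ℝ)) := by rw [hcc]; ring
  rw [hgoal_eq]
  calc cc * (G.rEps ε * (G.diam : ℝ))
      ≤ cc * (2 * L₂ * (Δ * L₁ ^ p / (2 * a * (1 - ε))) ^ (1/p)) :=
        mul_le_mul_of_nonneg_left hchain hccnn
    _ = L₂ * ((1 - ε) ^ (1/p) * ((a / Δ) ^ (1/p) *
          (Δ * L₁ ^ p / (2 * a * (1 - ε))) ^ (1/p))) := by rw [hcc]; ring
    _ = L₂ * ((1 - ε) * (a / Δ * (Δ * L₁ ^ p / (2 * a * (1 - ε))))) ^ (1/p) := by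
        rw [← Real.mul_rpow (by positivity) (by positivity),
          ← Real.mul_rpow hε1'.le (by positivity)]
    _ = L₂ * (L₁ ^ p * (1/2)) ^ (1/p) := by
        congr 2
        field_simp
    _ = L₂ * (L₁ * (1/2) ^ (1/p)) := by
        rw [Real.mul_rpow (by positivity) (by norm_num), one_div p,
          Real.rpow_rpow_inv hL₁.le hp0.ne']
    _ ≤ L₂ * (L₁ * 1) := by
        apply mul_le_mul_of_nonneg_left _ hL₂.le
        apply mul_le_mul_of_nonneg_left _ hL₁.le
        exact Real.rpow_le_one (by norm_num) (by norm_num) hip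
    _ = L₁ * L₂ := by ring
end

section
/- (Generalized Jolissaint–Valette inequality) Let G=(V,E) be a finite connected graph, X a real Banach space, and p ∈ [1,∞). Then c_X(G) ≥ 2^{−(p−1)/p}·D(G)·(λ₁(G;X,p)/k(G))^{1/p}, where k(G) := (∑_{v∈V} deg(v))/|V| is the average degree and D(G) := max over permutations α of V of min_{v∈V} d(v,α(v)) is the maximal displacement. In particular, if the automorphism group of G acts transitively on V, then c_X(G) ≥ c·diam(G)·(λ₁(G;X,p)/Δ(G))^{1/p} for a universal constant c > 0. -/
open scoped ENNReal

/-- Maximal displacement `D(G) = max_α min_v d(v, α v)`. -/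
noncomputable def MultiGraph.maxDisp (G : MultiGraph) : ℕ :=
  sSup {k : ℕ | ∃ α : Equiv.Perm G.V, ∀ v, k ≤ G.dist v (α v)}

/-- Average degree `k(G)`. -/
noncomputable def MultiGraph.avgDeg (G : MultiGraph) : ℝ :=
  (∑ v, (G.deg v : ℝ)) / (Fintype.card G.V : ℝ)

/-- The automorphism group acts transitively on the vertices. -/
def MultiGraph.IsVertexTransitive (G : MultiGraph) : Prop :=
  ∀ v w : G.V, ∃ α : Equiv.Perm G.V, (∀ a b, G.m (α a) (α b) = G.m a b) ∧ α v = w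

section Aux

open Finset

lemma jv_add_rpow {a b p : ℝ} (ha : 0 ≤ a) (hb : 0 ≤ b) (hp : 1 ≤ p) :
    (a + b) ^ p ≤ 2 ^ (p-1) * (a ^ p + b ^ p) := by
  have := NNReal.rpow_add_le_mul_rpow_add_rpow ⟨a, ha⟩ ⟨b, hb⟩ hp
  have h := NNReal.coe_le_coe.2 this
  push_cast at h
  convert h using 3 <;> rfl

lemma jv_helper {p lam k D L C : ℝ} (hp : 1 ≤ p) (hlam : 0 ≤ lam) (hk : 0 < k)
    (hD : 0 < D) (hL : 0 < L) (hC : 0 < C)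
    (h : lam ≤ C ^ p * k * (L / D) ^ p) :
    D * (lam / k) ^ (1/p) ≤ C * L := by
  have hp0 : 0 < p := lt_of_lt_of_le one_pos hp
  have h1 : lam / k ≤ (C * L / D) ^ p := by
    rw [div_le_iff₀ hk]
    calc lam ≤ C ^ p * k * (L / D) ^ p := h
      _ = (C * (L / D)) ^ p * k := by
          rw [Real.mul_rpow hC.le (by positivity)]; ring
      _ = (C * L / D) ^ p * k := by rw [mul_div_assoc]
  have h2 : (lam/k) ^ (1/p) ≤ C * L / D := by
    calc (lam/k) ^ (1/p) ≤ ((C*L/D) ^ p) ^ (1/p) :=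
          Real.rpow_le_rpow (by positivity) h1 (by positivity)
      _ = C*L/D := by
          rw [← Real.rpow_mul (by positivity), mul_one_div_cancel hp0.ne', Real.rpow_one]
  calc D * (lam/k) ^ (1/p) ≤ D * (C*L/D) := by
        exact mul_le_mul_of_nonneg_left h2 hD.le
    _ = C * L := by field_simp
end Aux
namespace MultiGraph

open Finset

variable (G : MultiGraph)

lemma jv_set_nonneg {X : Type} [NormedAddCommGroup X] [NormedSpace ℝ X] {p : ℝ}
    {r : ℝ} (hr : r ∈ {r : ℝ | ∃ f : G.V → X, (¬ ∀ v w, f v = f w) ∧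
    r = (∑ v, ∑ w, (G.m v w : ℝ) * ‖f w - f v‖ ^ p) / (∑ v, ‖f v - G.mean f‖ ^ p)}) :
    0 ≤ r := by
  obtain ⟨f, -, rfl⟩ := hr
  apply div_nonneg
  · exact Finset.sum_nonneg fun v _ => Finset.sum_nonneg fun w _ =>
      mul_nonneg (Nat.cast_nonneg _) (Real.rpow_nonneg (norm_nonneg _) _)
  · exact Finset.sum_nonneg fun v _ => Real.rpow_nonneg (norm_nonneg _) _

lemma lam1_nonneg (X : Type) [NormedAddCommGroup X] [NormedSpace ℝ X] (p : ℝ) :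
    0 ≤ G.lam1 X p := by
  unfold lam1
  have := Real.sInf_nonneg (s := {r : ℝ | ∃ f : G.V → X, (¬ ∀ v w, f v = f w) ∧
    r = (∑ v, ∑ w, (G.m v w : ℝ) * ‖f w - f v‖ ^ p) / (∑ v, ‖f v - G.mean f‖ ^ p)})
    (fun r hr => G.jv_set_nonneg hr)
  linarith

lemma distortion_nonneg (X : Type) [NormedAddCommGroup X] : 0 ≤ G.distortion X := by
  apply Real.sInf_nonneg
  rintro r ⟨f, L₁, L₂, h1, h2, -, -, rfl⟩
  positivity

lemma lam1_eq_zero_of_sub {X : Type} [NormedAddCommGroup X] [NormedSpace ℝ X] (p : ℝ)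
    (h : ∀ f : G.V → X, ∀ v w, f v = f w) : G.lam1 X p = 0 := by
  unfold lam1
  have : {r : ℝ | ∃ f : G.V → X, (¬ ∀ v w, f v = f w) ∧
    r = (∑ v, ∑ w, (G.m v w : ℝ) * ‖f w - f v‖ ^ p) / (∑ v, ‖f v - G.mean f‖ ^ p)} = ∅ := by
    ext r
    simp only [Set.mem_setOf_eq, Set.mem_empty_iff_false, iff_false, not_exists, not_and]
    intro f hf _
    exact hf (h f)
  rw [this, Real.sInf_empty, mul_zero]

lemma dist_pos (hc : G.Connected) {v w : G.V} (h : v ≠ w) : 0 < G.dist v w :=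
  hc.pos_dist_of_ne h

lemma dist_eq_one {v w : G.V} (h : v ≠ w) (hm : 0 < G.m v w) : G.dist v w = 1 :=
  SimpleGraph.dist_eq_one_iff_adj.2 (⟨h, hm⟩ : v ≠ w ∧ 0 < G.m v w)

lemma dist_le_diam (v w : G.V) : G.dist v w ≤ G.diam :=
  Finset.le_sup (f := fun q : G.V × G.V => G.dist q.1 q.2) (Finset.mem_univ (v, w))

lemma lam1_le {X : Type} [NormedAddCommGroup X] [NormedSpace ℝ X] (p : ℝ)
    {f : G.V → X} (hf : ¬ ∀ v w, f v = f w) :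
    G.lam1 X p ≤ (1/2) * ((∑ v, ∑ w, (G.m v w : ℝ) * ‖f w - f v‖ ^ p) /
      (∑ v, ‖f v - G.mean f‖ ^ p)) := by
  unfold lam1
  apply mul_le_mul_of_nonneg_left _ (by norm_num)
  exact csInf_le ⟨0, fun r hr => G.jv_set_nonneg hr⟩ ⟨f, hf, rfl⟩

lemma den_pos {X : Type} [NormedAddCommGroup X] [NormedSpace ℝ X] {p : ℝ}
    {f : G.V → X} (hf : ¬ ∀ v w, f v = f w) :
    0 < ∑ v, ‖f v - G.mean f‖ ^ p := by
  push_neg at hf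
  obtain ⟨v, w, hvw⟩ := hf
  have : f v ≠ G.mean f ∨ f w ≠ G.mean f := by
    by_contra h
    push_neg at h
    exact hvw (h.1.trans h.2.symm)
  obtain h | h := this
  · exact Finset.sum_pos' (fun u _ => Real.rpow_nonneg (norm_nonneg _) _)
      ⟨v, Finset.mem_univ v, Real.rpow_pos_of_pos (norm_pos_iff.2 (sub_ne_zero.2 h)) _⟩
  · exact Finset.sum_pos' (fun u _ => Real.rpow_nonneg (norm_nonneg _) _)
      ⟨w, Finset.mem_univ w, Real.rpow_pos_of_pos (norm_pos_iff.2 (sub_ne_zero.2 h)) _⟩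

end MultiGraph
namespace MultiGraph

open Finset

variable (G : MultiGraph)

lemma jv_core (hc : G.Connected) {X : Type} [NormedAddCommGroup X] [NormedSpace ℝ X]
    {p : ℝ} (hp : 1 ≤ p) {f : G.V → X} {L₁ L₂ : ℝ} (hL₁ : 0 < L₁) (hL₂ : 0 < L₂)
    (h₁ : ∀ v w, ‖f v - f w‖ ≤ L₁ * (G.dist v w : ℝ))
    (h₂ : ∀ v w, (G.dist v w : ℝ) ≤ L₂ * ‖f v - f w‖)
    (α : Equiv.Perm G.V) :
    G.lam1 X p * ∑ v, (G.dist v (α v) : ℝ) ^ p ≤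
      2 ^ (p-1) * (L₁*L₂) ^ p * ∑ v, (G.deg v : ℝ) := by
  have hp0 : (0:ℝ) < p := lt_of_lt_of_le one_pos hp
  set S : ℝ := ∑ v, (G.dist v (α v) : ℝ) ^ p with hS
  have hS0 : 0 ≤ S := Finset.sum_nonneg fun v _ => Real.rpow_nonneg (Nat.cast_nonneg _) _
  have hRHS0 : 0 ≤ 2 ^ (p-1) * (L₁*L₂) ^ p * ∑ v, (G.deg v : ℝ) := by
    have : (0:ℝ) ≤ ∑ v, (G.deg v : ℝ) :=
      Finset.sum_nonneg fun v _ => Nat.cast_nonneg _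
    positivity
  rcases eq_or_lt_of_le hS0 with hS0' | hSpos
  · rw [← hS0', mul_zero]; exact hRHS0
  -- some vertex is displaced
  have hv₀ : ∃ v₀, v₀ ≠ α v₀ := by
    by_contra hcon
    push_neg at hcon
    have : S = 0 := by
      apply Finset.sum_eq_zero
      intro v _
      have hd : G.dist v v = 0 := by simp [MultiGraph.dist]
      rw [← hcon v, hd]
      simp [Real.zero_rpow hp0.ne']
    exact absurd this (ne_of_gt hSpos)
  obtain ⟨v₀, hv₀⟩ := hv₀
  have hfne : f v₀ ≠ f (α v₀) := by
    intro h
    have h1 : (G.dist v₀ (α v₀) : ℝ) ≤ 0 := by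
      have := h₂ v₀ (α v₀)
      rw [h] at this
      simpa using this
    have := G.dist_pos hc hv₀
    have : (0:ℝ) < (G.dist v₀ (α v₀) : ℝ) := by exact_mod_cast this
    linarith
  have hf : ¬ ∀ v w, f v = f w := fun h => hfne (h v₀ (α v₀))
  set den : ℝ := ∑ v, ‖f v - G.mean f‖ ^ p with hden
  set num : ℝ := ∑ v, ∑ w, (G.m v w : ℝ) * ‖f w - f v‖ ^ p with hnum
  have hdpos : 0 < den := G.den_pos hf
  have hnum0 : 0 ≤ num :=
    Finset.sum_nonneg fun v _ => Finset.sum_nonneg fun w _ =>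
      mul_nonneg (Nat.cast_nonneg _) (Real.rpow_nonneg (norm_nonneg _) _)
  -- numerator bound
  have hnum_le : num ≤ L₁ ^ p * ∑ v, (G.deg v : ℝ) := by
    have key : ∀ v w : G.V, (G.m v w : ℝ) * ‖f w - f v‖ ^ p ≤ (G.m v w : ℝ) * L₁ ^ p := by
      intro v w
      rcases Nat.eq_zero_or_pos (G.m v w) with hm | hm
      · simp [hm]
      rcases eq_or_ne v w with rfl | hvw
      · rw [sub_self, norm_zero, Real.zero_rpow hp0.ne', mul_zero]
        positivity
      · apply mul_le_mul_of_nonneg_left _ (Nat.cast_nonneg _)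
        have hd : G.dist w v = 1 := G.dist_eq_one (Ne.symm hvw) (by rwa [G.symm] at hm)
        have := h₁ w v
        rw [hd] at this
        simp only [Nat.cast_one, mul_one] at this
        exact Real.rpow_le_rpow (norm_nonneg _) this hp0.le
    calc num ≤ ∑ v, ∑ w, (G.m v w : ℝ) * L₁ ^ p :=
          Finset.sum_le_sum fun v _ => Finset.sum_le_sum fun w _ => key v w
      _ = L₁ ^ p * ∑ v, (G.deg v : ℝ) := by
          rw [Finset.mul_sum]
          apply Finset.sum_congr rfl
          intro v _
          rw [← Finset.sum_mul]
          rw [mul_comm]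
          congr 1
          unfold deg
          push_cast
          rfl
  -- displacement bound
  have hS_le : S ≤ 2 ^ p * L₂ ^ p * den := by
    have key : ∀ v : G.V, (G.dist v (α v) : ℝ) ^ p ≤
        2 ^ (p-1) * L₂ ^ p * (‖f v - G.mean f‖ ^ p + ‖f (α v) - G.mean f‖ ^ p) := by
      intro v
      have step1 : (G.dist v (α v) : ℝ) ^ p ≤ (L₂ * ‖f v - f (α v)‖) ^ p :=
        Real.rpow_le_rpow (Nat.cast_nonneg _) (h₂ v (α v)) hp0.le
      have step2 : ‖f v - f (α v)‖ ≤ ‖f v - G.mean f‖ + ‖f (α v) - G.mean f‖ := by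
        have := norm_sub_le_norm_sub_add_norm_sub (f v) (G.mean f) (f (α v))
        calc ‖f v - f (α v)‖ ≤ ‖f v - G.mean f‖ + ‖G.mean f - f (α v)‖ :=
              norm_sub_le_norm_sub_add_norm_sub _ _ _
          _ = ‖f v - G.mean f‖ + ‖f (α v) - G.mean f‖ := by rw [norm_sub_rev (G.mean f)]
      have step3 : (L₂ * ‖f v - f (α v)‖) ^ p = L₂ ^ p * ‖f v - f (α v)‖ ^ p :=
        Real.mul_rpow hL₂.le (norm_nonneg _)
      have step4 : ‖f v - f (α v)‖ ^ p ≤ (‖f v - G.mean f‖ + ‖f (α v) - G.mean f‖) ^ p :=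
        Real.rpow_le_rpow (norm_nonneg _) step2 hp0.le
      have step5 := jv_add_rpow (norm_nonneg (f v - G.mean f))
        (norm_nonneg (f (α v) - G.mean f)) hp
      calc (G.dist v (α v) : ℝ) ^ p ≤ L₂ ^ p * ‖f v - f (α v)‖ ^ p := by
            rw [← step3]; exact step1
        _ ≤ L₂ ^ p * ((‖f v - G.mean f‖ + ‖f (α v) - G.mean f‖) ^ p) :=
            mul_le_mul_of_nonneg_left step4 (by positivity)
        _ ≤ L₂ ^ p * (2 ^ (p-1) * (‖f v - G.mean f‖ ^ p + ‖f (α v) - G.mean f‖ ^ p)) :=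
            mul_le_mul_of_nonneg_left step5 (by positivity)
        _ = 2 ^ (p-1) * L₂ ^ p * (‖f v - G.mean f‖ ^ p + ‖f (α v) - G.mean f‖ ^ p) := by
            ring
    have hsum : ∑ v, (‖f v - G.mean f‖ ^ p + ‖f (α v) - G.mean f‖ ^ p) = 2 * den := by
      rw [Finset.sum_add_distrib]
      have : ∑ v, ‖f (α v) - G.mean f‖ ^ p = den :=
        Equiv.sum_comp α (fun v => ‖f v - G.mean f‖ ^ p)
      rw [this, hden]
      ring
    calc S ≤ ∑ v, 2 ^ (p-1) * L₂ ^ p * (‖f v - G.mean f‖ ^ p + ‖f (α v) - G.mean f‖ ^ p) :=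
          Finset.sum_le_sum fun v _ => key v
      _ = 2 ^ (p-1) * L₂ ^ p * (2 * den) := by rw [← Finset.mul_sum, hsum]
      _ = (2 ^ (p-1) * 2) * L₂ ^ p * den := by ring
      _ = 2 ^ p * L₂ ^ p * den := by
          have h2 : (2:ℝ) ^ (p-1) * 2 = 2 ^ p := by
            rw [← Real.rpow_add_one (by norm_num : (2:ℝ) ≠ 0) (p-1)]
            norm_num
          rw [h2]
  -- put it together
  have hlam_le := G.lam1_le p hf
  have hratio : 0 ≤ (1/2) * (num / den) := by positivity
  calc G.lam1 X p * S ≤ ((1/2) * (num / den)) * S := by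
        exact mul_le_mul_of_nonneg_right hlam_le (le_of_lt hSpos)
    _ ≤ ((1/2) * (num / den)) * (2 ^ p * L₂ ^ p * den) :=
        mul_le_mul_of_nonneg_left hS_le hratio
    _ = (1/2) * (2 ^ p * L₂ ^ p) * num := by
        field_simp
    _ ≤ (1/2) * (2 ^ p * L₂ ^ p) * (L₁ ^ p * ∑ v, (G.deg v : ℝ)) := by
        apply mul_le_mul_of_nonneg_left hnum_le (by positivity)
    _ = 2 ^ (p-1) * (L₁*L₂) ^ p * ∑ v, (G.deg v : ℝ) := by
        rw [Real.mul_rpow hL₁.le hL₂.le, Real.rpow_sub two_pos, Real.rpow_one]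
        ring

end MultiGraph
namespace MultiGraph

open Finset

variable (G : MultiGraph)

lemma deg_pos (hc : G.Connected) (hn : 1 < Fintype.card G.V) (v : G.V) : 0 < G.deg v := by
  obtain ⟨w, hw⟩ := Fintype.exists_ne_of_one_lt_card hn v
  obtain ⟨W⟩ := (hc : G.toSimple.Connected).preconnected v w
  cases W with
  | nil => exact absurd rfl hw.symm
  | @cons _ u _ h W' =>
    calc 0 < G.m v u := (h : v ≠ u ∧ 0 < G.m v u).2
      _ ≤ ∑ z, G.m v z := Finset.single_le_sum (fun z _ => Nat.zero_le _) (Finset.mem_univ u)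
      _ = G.deg v := rfl

lemma sum_deg_pos (hc : G.Connected) (hn : 1 < Fintype.card G.V) :
    0 < ∑ v, (G.deg v : ℝ) := by
  have : Nonempty G.V := (hc : G.toSimple.Connected).nonempty
  apply Finset.sum_pos
  · intro v _
    exact_mod_cast G.deg_pos hc hn v
  · exact Finset.univ_nonempty

lemma avgDeg_pos (hc : G.Connected) (hn : 1 < Fintype.card G.V) : 0 < G.avgDeg := by
  unfold avgDeg
  apply div_pos (G.sum_deg_pos hc hn)
  exact_mod_cast Nat.lt_of_lt_of_le Nat.zero_lt_one hn.le

lemma maxDisp_mem (hc : G.Connected) :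
    ∃ α : Equiv.Perm G.V, ∀ v, G.maxDisp ≤ G.dist v (α v) := by
  have hne : Nonempty G.V := (hc : G.toSimple.Connected).nonempty
  have h0 : (0 : ℕ) ∈ {k : ℕ | ∃ α : Equiv.Perm G.V, ∀ v, k ≤ G.dist v (α v)} :=
    ⟨1, fun v => Nat.zero_le _⟩
  have hbdd : BddAbove {k : ℕ | ∃ α : Equiv.Perm G.V, ∀ v, k ≤ G.dist v (α v)} := by
    refine ⟨G.diam, ?_⟩
    rintro k ⟨α, hα⟩
    obtain ⟨v⟩ := hne
    exact le_trans (hα v) (G.dist_le_diam v (α v))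
  have := Nat.sSup_mem ⟨0, h0⟩ hbdd
  exact this

lemma distSet_nonempty (hc : G.Connected) {X : Type} [NormedAddCommGroup X]
    [NormedSpace ℝ X] {x : X} (hx : x ≠ 0) :
    {c : ℝ | ∃ (f : G.V → X) (L₁ L₂ : ℝ), 0 < L₁ ∧ 0 < L₂ ∧
    (∀ v w, ‖f v - f w‖ ≤ L₁ * (G.dist v w : ℝ)) ∧
    (∀ v w, (G.dist v w : ℝ) ≤ L₂ * ‖f v - f w‖) ∧ c = L₁ * L₂}.Nonempty := by
  classical
  set n := Fintype.card G.V with hn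
  set e := Fintype.equivFin G.V with he
  set f : G.V → X := fun v => (((e v : ℕ) : ℝ)) • x with hf
  have hxn : 0 < ‖x‖ := norm_pos_iff.2 hx
  have hnorm : ∀ v w, ‖f v - f w‖ = |((e v : ℕ):ℝ) - ((e w : ℕ):ℝ)| * ‖x‖ := by
    intro v w
    rw [hf]
    simp only [← sub_smul, norm_smul, Real.norm_eq_abs]
  refine ⟨((n:ℝ)+1) * ‖x‖ * (((G.diam:ℝ)+1) / ‖x‖), f, ((n:ℝ)+1) * ‖x‖,
    ((G.diam:ℝ)+1) / ‖x‖, by positivity, by positivity, ?_, ?_, rfl⟩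
  · intro v w
    rcases eq_or_ne v w with rfl | hvw
    · rw [sub_self, norm_zero]
      positivity
    · have hd : (1:ℝ) ≤ (G.dist v w : ℝ) := by exact_mod_cast G.dist_pos hc hvw
      rw [hnorm]
      have ha : ((e v : ℕ):ℝ) ≤ n := by exact_mod_cast (e v).isLt.le
      have hb : ((e w : ℕ):ℝ) ≤ n := by exact_mod_cast (e w).isLt.le
      have ha0 : (0:ℝ) ≤ ((e v : ℕ):ℝ) := Nat.cast_nonneg _
      have hb0 : (0:ℝ) ≤ ((e w : ℕ):ℝ) := Nat.cast_nonneg _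
      have habs : |((e v : ℕ):ℝ) - ((e w : ℕ):ℝ)| ≤ n := by
        rw [abs_sub_le_iff]
        constructor <;> linarith
      nlinarith [mul_le_mul_of_nonneg_right habs hxn.le,
        mul_nonneg (mul_nonneg (by positivity : (0:ℝ) ≤ (n:ℝ)+1) hxn.le)
          (by linarith : (0:ℝ) ≤ (G.dist v w:ℝ) - 1)]
  · intro v w
    rcases eq_or_ne v w with rfl | hvw
    · have h0 : G.dist v v = 0 := by simp [MultiGraph.dist]
      simp only [h0, Nat.cast_zero]
      positivity
    · have hd : (G.dist v w : ℝ) ≤ G.diam := by exact_mod_cast G.dist_le_diam v w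
      have hev : (e v : ℕ) ≠ (e w : ℕ) := by
        intro h
        exact hvw (e.injective (Fin.val_injective h))
      have h1 : (1:ℝ) ≤ |((e v : ℕ):ℝ) - ((e w : ℕ):ℝ)| := by
        have : (1:ℤ) ≤ |((e v : ℕ):ℤ) - ((e w : ℕ):ℤ)| := by
          apply Int.one_le_abs
          simpa [sub_eq_zero] using fun h => hev (by exact_mod_cast h)
        have h3 := (@Int.cast_le ℝ _ _ _).2 this
        rwa [Int.cast_abs, Int.cast_one, Int.cast_sub, Int.cast_natCast, Int.cast_natCast] at h3
      rw [hnorm]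
      have hrw : ((G.diam:ℝ)+1) / ‖x‖ * (|((e v : ℕ):ℝ) - ((e w : ℕ):ℝ)| * ‖x‖)
          = ((G.diam:ℝ)+1) * |((e v : ℕ):ℝ) - ((e w : ℕ):ℝ)| := by
        field_simp
      rw [hrw]
      nlinarith

end MultiGraph
namespace MultiGraph

open Finset

lemma jv_part1 (G : MultiGraph) (hc : G.Connected)
    (X : Type) [NormedAddCommGroup X] [NormedSpace ℝ X] (p : ℝ) (hp : 1 ≤ p) :
    (2:ℝ) ^ (-(p-1)/p) * (G.maxDisp : ℝ) * (G.lam1 X p / G.avgDeg) ^ (1/p)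
      ≤ G.distortion X := by
  have hp0 : (0:ℝ) < p := lt_of_lt_of_le one_pos hp
  by_cases hX : ∀ f : G.V → X, ∀ v w, f v = f w
  · rw [G.lam1_eq_zero_of_sub p hX, zero_div,
      Real.zero_rpow (one_div_ne_zero hp0.ne'), mul_zero]
    exact G.distortion_nonneg X
  push_neg at hX
  obtain ⟨f₀, v₁, w₁, hne₁⟩ := hX
  have hx : f₀ v₁ - f₀ w₁ ≠ 0 := sub_ne_zero.2 hne₁
  by_cases hD : G.maxDisp = 0
  · rw [hD]
    simp only [Nat.cast_zero, mul_zero, zero_mul]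
    exact G.distortion_nonneg X
  have hD1 : 1 ≤ G.maxDisp := Nat.one_le_iff_ne_zero.2 hD
  obtain ⟨α, hα⟩ := G.maxDisp_mem hc
  have hVne : Nonempty G.V := (hc : G.toSimple.Connected).nonempty
  obtain ⟨v₀⟩ := hVne
  have hv₀ : v₀ ≠ α v₀ := by
    intro h
    have h1 := hα v₀
    have h2 : G.dist v₀ (α v₀) = 0 := by rw [← h]; simp [MultiGraph.dist]
    omega
  have : Nontrivial G.V := ⟨v₀, α v₀, hv₀⟩
  have hn : 1 < Fintype.card G.V := Fintype.one_lt_card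
  have havg : 0 < G.avgDeg := G.avgDeg_pos hc hn
  have hDpos : (0:ℝ) < (G.maxDisp : ℝ) := by exact_mod_cast hD1
  unfold distortion
  apply le_csInf (G.distSet_nonempty hc hx)
  rintro c ⟨f, L₁, L₂, hL₁, hL₂, h₁, h₂, rfl⟩
  have core := G.jv_core hc hp hL₁ hL₂ h₁ h₂ α
  have hcard : (0:ℝ) < (Fintype.card G.V : ℝ) := by exact_mod_cast lt_trans Nat.zero_lt_one hn
  have hSge : (Fintype.card G.V : ℝ) * (G.maxDisp:ℝ)^p ≤ ∑ v, (G.dist v (α v):ℝ)^p := by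
    calc (Fintype.card G.V : ℝ) * (G.maxDisp:ℝ)^p
        = ∑ _v : G.V, (G.maxDisp:ℝ)^p := by
          rw [Finset.sum_const, nsmul_eq_mul, Finset.card_univ]
      _ ≤ ∑ v, (G.dist v (α v):ℝ)^p := Finset.sum_le_sum fun v _ =>
          Real.rpow_le_rpow (Nat.cast_nonneg _) (by exact_mod_cast hα v) hp0.le
  have hsum : ∑ v, (G.deg v:ℝ) = (Fintype.card G.V : ℝ) * G.avgDeg := by
    unfold avgDeg
    field_simp
  have hlam0 := G.lam1_nonneg X p
  have h5 : G.lam1 X p * (G.maxDisp:ℝ)^p ≤ 2^(p-1) * (L₁*L₂)^p * G.avgDeg := by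
    have hA : G.lam1 X p * ((Fintype.card G.V : ℝ) * (G.maxDisp:ℝ)^p)
        ≤ 2^(p-1) * (L₁*L₂)^p * ((Fintype.card G.V : ℝ) * G.avgDeg) := by
      calc G.lam1 X p * ((Fintype.card G.V : ℝ) * (G.maxDisp:ℝ)^p)
          ≤ G.lam1 X p * ∑ v, (G.dist v (α v):ℝ)^p :=
            mul_le_mul_of_nonneg_left hSge hlam0
        _ ≤ 2^(p-1) * (L₁*L₂)^p * ∑ v, (G.deg v : ℝ) := core
        _ = 2^(p-1) * (L₁*L₂)^p * ((Fintype.card G.V : ℝ) * G.avgDeg) := by rw [hsum]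
    have hA' : (G.lam1 X p * (G.maxDisp:ℝ)^p) * (Fintype.card G.V : ℝ)
        ≤ (2^(p-1) * (L₁*L₂)^p * G.avgDeg) * (Fintype.card G.V : ℝ) := by
      ring_nf
      ring_nf at hA
      linarith
    exact le_of_mul_le_mul_right hA' hcard
  have hCp : ((2:ℝ)^((p-1)/p)) ^ p = 2^(p-1) := by
    rw [← Real.rpow_mul (by norm_num : (0:ℝ) ≤ 2), div_mul_cancel₀ _ hp0.ne']
  have hDp : (0:ℝ) < (G.maxDisp:ℝ)^p := Real.rpow_pos_of_pos hDpos _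
  have hfinal : G.lam1 X p ≤ ((2:ℝ)^((p-1)/p)) ^ p * G.avgDeg * ((L₁*L₂) / (G.maxDisp:ℝ)) ^ p := by
    rw [hCp, Real.div_rpow (mul_pos hL₁ hL₂).le (Nat.cast_nonneg _)]
    rw [← mul_div_assoc, le_div_iff₀ hDp]
    calc G.lam1 X p * (G.maxDisp:ℝ)^p ≤ 2^(p-1) * (L₁*L₂)^p * G.avgDeg := h5
      _ = 2^(p-1) * G.avgDeg * (L₁*L₂)^p := by ring
  have helper := jv_helper hp hlam0 havg hDpos (mul_pos hL₁ hL₂)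
    (Real.rpow_pos_of_pos two_pos ((p-1)/p)) hfinal
  have hCinv : (2:ℝ)^(-(p-1)/p) = ((2:ℝ)^((p-1)/p))⁻¹ := by
    rw [neg_div, Real.rpow_neg (by norm_num : (0:ℝ) ≤ 2)]
  rw [hCinv]
  set C : ℝ := (2:ℝ)^((p-1)/p) with hC
  have hCpos : 0 < C := Real.rpow_pos_of_pos two_pos _
  calc C⁻¹ * (G.maxDisp:ℝ) * (G.lam1 X p / G.avgDeg) ^ (1/p)
      = C⁻¹ * ((G.maxDisp:ℝ) * (G.lam1 X p / G.avgDeg) ^ (1/p)) := by ring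
    _ ≤ C⁻¹ * (C * (L₁ * L₂)) := mul_le_mul_of_nonneg_left helper (by positivity)
    _ = L₁ * L₂ := by field_simp

end MultiGraph
namespace MultiGraph

open Finset

variable (G : MultiGraph)

lemma dist_map_le (hc : G.Connected) {β : Equiv.Perm G.V}
    (hβ : ∀ a b, G.toSimple.Adj a b → G.toSimple.Adj (β a) (β b)) (a b : G.V) :
    G.dist (β a) (β b) ≤ G.dist a b := by
  obtain ⟨W, hW⟩ := (hc : G.toSimple.Connected).exists_walk_length_eq_dist a b
  let F : G.toSimple →g G.toSimple := ⟨β, fun h => hβ _ _ h⟩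
  calc G.dist (β a) (β b) ≤ (W.map F).length := SimpleGraph.dist_le _
    _ = W.length := SimpleGraph.Walk.length_map _ _
    _ = G.dist a b := hW

lemma dist_map (hc : G.Connected) {α : Equiv.Perm G.V}
    (hα : ∀ a b, G.m (α a) (α b) = G.m a b) (a b : G.V) :
    G.dist (α a) (α b) = G.dist a b := by
  have hadj : ∀ a b : G.V, G.toSimple.Adj a b → G.toSimple.Adj (α a) (α b) := by
    intro a b hab
    obtain ⟨h1, h2⟩ := (hab : a ≠ b ∧ 0 < G.m a b)
    exact (⟨fun h => h1 (α.injective h), by rwa [hα]⟩ : α a ≠ α b ∧ 0 < G.m (α a) (α b))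
  have hadj' : ∀ a b : G.V, G.toSimple.Adj a b → G.toSimple.Adj (α⁻¹ a) (α⁻¹ b) := by
    intro a b hab
    obtain ⟨h1, h2⟩ := (hab : a ≠ b ∧ 0 < G.m a b)
    show α⁻¹ a ≠ α⁻¹ b ∧ 0 < G.m (α⁻¹ a) (α⁻¹ b)
    refine ⟨fun h => h1 (by rw [← α.apply_symm_apply a, ← α.apply_symm_apply b]; exact congrArg α h), ?_⟩
    have := hα (α⁻¹ a) (α⁻¹ b)
    simp only [(show ∀ x, α (α⁻¹ x) = x from fun x => α.apply_symm_apply x)] at this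
    rwa [← this]
  apply le_antisymm (G.dist_map_le hc hadj a b)
  have := G.dist_map_le hc hadj' (α a) (α b)
  simpa using this

lemma card_ball_eq (hc : G.Connected) (ht : G.IsVertexTransitive) (t : ℕ) (v v' : G.V) :
    (Finset.univ.filter fun w => G.dist v w ≤ t).card
      = (Finset.univ.filter fun w => G.dist v' w ≤ t).card := by
  classical
  obtain ⟨α, hα, hαv⟩ := ht v v'
  apply Finset.card_bij' (fun w _ => α w) (fun w _ => α⁻¹ w)
  · intro w hw
    simp only [Finset.mem_filter, Finset.mem_univ, true_and] at hw ⊢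
    rw [← hαv, G.dist_map hc hα]
    exact hw
  · intro w hw
    simp only [Finset.mem_filter, Finset.mem_univ, true_and] at hw ⊢
    rw [← G.dist_map hc hα v (α⁻¹ w)]
    simp only [(show ∀ x, α (α⁻¹ x) = x from fun x => α.apply_symm_apply x), hαv]
    exact hw
  · intro w _; simp
  · intro w _; simp

lemma far_card (hc : G.Connected) (ht : G.IsVertexTransitive) (hδ : 1 ≤ G.diam) (v : G.V) :
    (Fintype.card G.V : ℝ) ≤
      2 * ((Finset.univ.filter fun w => (G.diam + 1)/2 ≤ G.dist v w).card : ℝ) := by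
  classical
  set t : ℕ := (G.diam + 1)/2 with htdef
  have ht1 : 1 ≤ t := by omega
  have h2t : 2 * t ≤ G.diam + 1 := by omega
  have hVne : Nonempty G.V := (hc : G.toSimple.Connected).nonempty
  have : Nonempty (G.V × G.V) := instNonemptyProd
  obtain ⟨q, -, hq⟩ := Finset.exists_mem_eq_sup (Finset.univ : Finset (G.V × G.V))
    Finset.univ_nonempty (fun q : G.V × G.V => G.dist q.1 q.2)
  set x := q.1
  set y := q.2
  have hxy : G.dist x y = G.diam := hq.symm
  -- balls of radius t-1 around x and y are disjoint
  have hdisj : Disjoint (Finset.univ.filter fun w => G.dist x w ≤ t - 1)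
      (Finset.univ.filter fun w => G.dist y w ≤ t - 1) := by
    rw [Finset.disjoint_filter]
    intro w _ hxw hyw
    have htri : G.dist x y ≤ G.dist x w + G.dist w y := hc.dist_triangle
    have : G.dist w y = G.dist y w := SimpleGraph.dist_comm ..
    omega
  have hcardle : (Finset.univ.filter fun w => G.dist x w ≤ t - 1).card
      + (Finset.univ.filter fun w => G.dist y w ≤ t - 1).card ≤ Fintype.card G.V := by
    rw [← Finset.card_union_of_disjoint hdisj]
    exact Finset.card_le_univ _
  have heq := G.card_ball_eq hc ht (t-1) x y
  have hball : 2 * (Finset.univ.filter fun w => G.dist v w ≤ t - 1).card ≤ Fintype.card G.V := by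
    have := G.card_ball_eq hc ht (t-1) v x
    omega
  have hsplit : (Finset.univ.filter fun w => G.dist v w ≤ t - 1).card
      + (Finset.univ.filter fun w => t ≤ G.dist v w).card = Fintype.card G.V := by
    rw [← Finset.card_union_of_disjoint]
    · rw [← Finset.card_univ]
      congr 1
      ext w
      simp only [Finset.mem_union, Finset.mem_filter, Finset.mem_univ, true_and, iff_true]
      omega
    · rw [Finset.disjoint_filter]
      intro w _ h1 h2
      omega
  have : 2 * ((Finset.univ.filter fun w => t ≤ G.dist v w).card) ≥ Fintype.card G.V := by omega
  exact_mod_cast this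

end MultiGraph
namespace MultiGraph

open Finset

variable (G : MultiGraph)

lemma exists_perm_disp (hc : G.Connected) (ht : G.IsVertexTransitive) (hδ : 1 ≤ G.diam)
    {p : ℝ} (hp0 : 0 < p) :
    ∃ α : Equiv.Perm G.V,
      (Fintype.card G.V : ℝ)/2 * ((((G.diam + 1)/2 : ℕ)):ℝ)^p
        ≤ ∑ v, (G.dist v (α v) : ℝ)^p := by
  classical
  have hVne : Nonempty G.V := (hc : G.toSimple.Connected).nonempty
  set n := Fintype.card G.V with hn
  have hnpos : 0 < n := Fintype.card_pos
  have hnR : (0:ℝ) < (n:ℝ) := by exact_mod_cast hnpos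
  set t : ℕ := (G.diam + 1)/2 with htdef
  set A : Finset (Equiv.Perm G.V) :=
    Finset.univ.filter (fun α => ∀ a b, G.m (α a) (α b) = G.m a b) with hA
  have hone : (1 : Equiv.Perm G.V) ∈ A := by
    simp only [hA, Finset.mem_filter, Finset.mem_univ, true_and]
    intro a b
    rfl
  have hAne : A.Nonempty := ⟨1, hone⟩
  have hfib : ∀ (v w w' : G.V),
      (A.filter fun α => α v = w).card = (A.filter fun α => α v = w').card := by
    intro v w w'
    obtain ⟨β, hβ, hβw⟩ := ht w w'
    apply Finset.card_bij' (fun α _ => β * α) (fun α _ => β⁻¹ * α)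
    · intro α hα
      simp only [hA, Finset.mem_filter, Finset.mem_univ, true_and] at hα ⊢
      refine ⟨fun a b => ?_, ?_⟩
      · rw [Equiv.Perm.mul_apply, Equiv.Perm.mul_apply, hβ, hα.1]
      · rw [Equiv.Perm.mul_apply, hα.2, hβw]
    · intro α hα
      simp only [hA, Finset.mem_filter, Finset.mem_univ, true_and] at hα ⊢
      have hβ' : ∀ a b, G.m (β⁻¹ a) (β⁻¹ b) = G.m a b := by
        intro a b
        have := hβ (β⁻¹ a) (β⁻¹ b)
        simpa using this.symm
      refine ⟨fun a b => ?_, ?_⟩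
      · rw [Equiv.Perm.mul_apply, Equiv.Perm.mul_apply, hβ', hα.1]
      · rw [Equiv.Perm.mul_apply, hα.2, ← hβw]
        simp
    · intro α _
      simp [mul_assoc]
    · intro α _
      simp [mul_assoc]
  have hAcard : ∀ v w, A.card = n * (A.filter fun α => α v = w).card := by
    intro v w
    rw [Finset.card_eq_sum_card_fiberwise (f := fun α => α v) (t := Finset.univ)
      (fun α _ => Finset.mem_univ (α v))]
    rw [Finset.sum_congr rfl (fun w' _ => hfib v w' w)]
    rw [Finset.sum_const, smul_eq_mul, Finset.card_univ]
  have hfw : ∀ v w, ((A.filter fun α => α v = w).card : ℝ) = (A.card:ℝ)/n := by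
    intro v w
    rw [eq_div_iff hnR.ne']
    have h := hAcard v w
    have h2 : (A.card : ℝ) = (n:ℝ) * ((A.filter fun α => α v = w).card : ℝ) := by
      exact_mod_cast h
    linarith
  have hper : ∀ v : G.V, ((n:ℝ)/2) * ((t:ℕ):ℝ)^p * ((A.card:ℝ)/n)
      ≤ ∑ α ∈ A, (G.dist v (α v):ℝ)^p := by
    intro v
    have hfibsum : ∑ α ∈ A, (G.dist v (α v):ℝ)^p
        = ∑ w, ((A.filter fun α => α v = w).card : ℝ) * (G.dist v w:ℝ)^p := by
      have hmaps : ∀ a ∈ A, a v ∈ (Finset.univ : Finset G.V) := fun a _ => Finset.mem_univ _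
      have hsf := Finset.sum_fiberwise_of_maps_to hmaps (fun a => ((G.dist v (a v) : ℝ))^p)
      rw [← hsf]
      apply Finset.sum_congr rfl
      intro w _
      have hinner : ∀ a ∈ A.filter (fun a => a v = w),
          (G.dist v (a v):ℝ)^p = (G.dist v w:ℝ)^p := fun a ha => by
        rw [(Finset.mem_filter.1 ha).2]
      rw [Finset.sum_congr rfl hinner, Finset.sum_const, nsmul_eq_mul]
    rw [hfibsum]
    have hconst : ∑ w, ((A.filter fun α => α v = w).card : ℝ) * (G.dist v w:ℝ)^p
        = ((A.card:ℝ)/n) * ∑ w, (G.dist v w:ℝ)^p := by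
      rw [Finset.mul_sum]
      exact Finset.sum_congr rfl fun w _ => by rw [hfw v w]
    rw [hconst]
    have hfar := G.far_card hc ht hδ v
    set far : Finset G.V := Finset.univ.filter (fun w => t ≤ G.dist v w) with hfardef
    have hsum_far : ((n:ℝ)/2) * ((t:ℕ):ℝ)^p ≤ ∑ w, (G.dist v w:ℝ)^p := by
      have htp0 : (0:ℝ) ≤ ((t:ℕ):ℝ)^p := Real.rpow_nonneg (Nat.cast_nonneg _) _
      calc ((n:ℝ)/2) * ((t:ℕ):ℝ)^p ≤ (far.card:ℝ) * ((t:ℕ):ℝ)^p := by nlinarith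
        _ = ∑ _w ∈ far, ((t:ℕ):ℝ)^p := by rw [Finset.sum_const, nsmul_eq_mul]
        _ ≤ ∑ w ∈ far, (G.dist v w:ℝ)^p := by
            apply Finset.sum_le_sum
            intro w hw
            have hwfar : t ≤ G.dist v w := (Finset.mem_filter.1 hw).2
            exact Real.rpow_le_rpow (Nat.cast_nonneg _) (by exact_mod_cast hwfar) hp0.le
        _ ≤ ∑ w, (G.dist v w:ℝ)^p := Finset.sum_le_sum_of_subset_of_nonneg
            (Finset.filter_subset _ _)
            (fun w _ _ => Real.rpow_nonneg (Nat.cast_nonneg _) _)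
    have hAn : (0:ℝ) ≤ (A.card:ℝ)/n := by positivity
    calc ((n:ℝ)/2) * ((t:ℕ):ℝ)^p * ((A.card:ℝ)/n)
        = ((A.card:ℝ)/n) * (((n:ℝ)/2) * ((t:ℕ):ℝ)^p) := by ring
      _ ≤ ((A.card:ℝ)/n) * ∑ w, (G.dist v w:ℝ)^p :=
          mul_le_mul_of_nonneg_left hsum_far hAn
  have htot : (A.card:ℝ) * (((n:ℝ)/2) * ((t:ℕ):ℝ)^p)
      ≤ ∑ α ∈ A, ∑ v, (G.dist v (α v):ℝ)^p := by
    rw [Finset.sum_comm]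
    calc (A.card:ℝ) * (((n:ℝ)/2) * ((t:ℕ):ℝ)^p)
        = ∑ _v : G.V, ((n:ℝ)/2) * ((t:ℕ):ℝ)^p * ((A.card:ℝ)/n) := by
          rw [Finset.sum_const, nsmul_eq_mul, Finset.card_univ, ← hn]
          field_simp
      _ ≤ ∑ v : G.V, ∑ α ∈ A, (G.dist v (α v):ℝ)^p :=
          Finset.sum_le_sum fun v _ => hper v
  by_contra hcon
  push_neg at hcon
  have hlt : ∑ α ∈ A, ∑ v, (G.dist v (α v):ℝ)^p
      < ∑ _α ∈ A, ((n:ℝ)/2 * ((t:ℕ):ℝ)^p) :=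
    Finset.sum_lt_sum_of_nonempty hAne fun α _ => hcon α
  rw [Finset.sum_const, nsmul_eq_mul] at hlt
  linarith

end MultiGraph
namespace MultiGraph

open Finset

lemma jv_part2 (G : MultiGraph) (hc : G.Connected) (ht : G.IsVertexTransitive)
    (X : Type) [NormedAddCommGroup X] [NormedSpace ℝ X] (p : ℝ) (hp : 1 ≤ p) :
    (1/4 : ℝ) * (G.diam : ℝ) * (G.lam1 X p / (G.maxDeg : ℝ)) ^ (1/p) ≤ G.distortion X := by
  have hp0 : (0:ℝ) < p := lt_of_lt_of_le one_pos hp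
  by_cases hX : ∀ f : G.V → X, ∀ v w, f v = f w
  · rw [G.lam1_eq_zero_of_sub p hX, zero_div,
      Real.zero_rpow (one_div_ne_zero hp0.ne'), mul_zero]
    exact G.distortion_nonneg X
  push_neg at hX
  obtain ⟨f₀, v₁, w₁, hne₁⟩ := hX
  have hx : f₀ v₁ - f₀ w₁ ≠ 0 := sub_ne_zero.2 hne₁
  by_cases hδ0 : G.diam = 0
  · rw [hδ0]
    simp only [Nat.cast_zero, mul_zero, zero_mul]
    exact G.distortion_nonneg X
  have hδ : 1 ≤ G.diam := Nat.one_le_iff_ne_zero.2 hδ0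
  have hVne : Nonempty G.V := (hc : G.toSimple.Connected).nonempty
  have hnontriv : Nontrivial G.V := by
    have : Nonempty (G.V × G.V) := instNonemptyProd
    obtain ⟨q, -, hq⟩ := Finset.exists_mem_eq_sup (Finset.univ : Finset (G.V × G.V))
      Finset.univ_nonempty (fun q : G.V × G.V => G.dist q.1 q.2)
    refine ⟨q.1, q.2, ?_⟩
    intro h
    rw [h] at hq
    have h0 : G.dist q.2 q.2 = 0 := by simp [MultiGraph.dist]
    have hdq : G.diam = G.dist q.2 q.2 := hq
    rw [h0] at hdq
    exact hδ0 hdq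
  have hn : 1 < Fintype.card G.V := Fintype.one_lt_card
  have hΔpos : 0 < G.maxDeg := by
    obtain ⟨v⟩ := hVne
    exact lt_of_lt_of_le (G.deg_pos hc hn v)
      (Finset.le_sup (f := fun v => G.deg v) (Finset.mem_univ v))
  have hΔR : (0:ℝ) < (G.maxDeg:ℝ) := by exact_mod_cast hΔpos
  have hδR : (0:ℝ) < (G.diam:ℝ) := by exact_mod_cast hδ
  obtain ⟨α, hα⟩ := G.exists_perm_disp hc ht hδ hp0
  set t : ℕ := (G.diam + 1)/2 with htdef
  have ht1 : 1 ≤ t := by rw [htdef]; omega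
  have htR : (G.diam:ℝ)/2 ≤ (t:ℝ) := by
    have h1 : G.diam ≤ 2*t := by rw [htdef]; omega
    have h2 : (G.diam:ℝ) ≤ 2*(t:ℝ) := by exact_mod_cast h1
    linarith
  have htpos : (0:ℝ) < (t:ℝ) := by exact_mod_cast ht1
  unfold distortion
  apply le_csInf (G.distSet_nonempty hc hx)
  rintro c ⟨f, L₁, L₂, hL₁, hL₂, h₁, h₂, rfl⟩
  have core := G.jv_core hc hp hL₁ hL₂ h₁ h₂ α
  have hlam0 := G.lam1_nonneg X p
  have hcard : (0:ℝ) < (Fintype.card G.V : ℝ) := by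
    exact_mod_cast lt_trans Nat.zero_lt_one hn
  have hdegsum : ∑ v, (G.deg v : ℝ) ≤ (Fintype.card G.V : ℝ) * (G.maxDeg:ℝ) := by
    calc ∑ v, (G.deg v:ℝ) ≤ ∑ _v : G.V, (G.maxDeg:ℝ) :=
        Finset.sum_le_sum fun v _ => by
          exact_mod_cast Finset.le_sup (f := fun v => G.deg v) (Finset.mem_univ v)
      _ = (Fintype.card G.V:ℝ) * (G.maxDeg:ℝ) := by
          rw [Finset.sum_const, nsmul_eq_mul, Finset.card_univ]
  have h5 : G.lam1 X p * ((Fintype.card G.V : ℝ)/2 * (t:ℝ)^p)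
      ≤ 2^(p-1) * (L₁*L₂)^p * ((Fintype.card G.V : ℝ) * (G.maxDeg:ℝ)) := by
    calc G.lam1 X p * ((Fintype.card G.V : ℝ)/2 * (t:ℝ)^p)
        ≤ G.lam1 X p * ∑ v, (G.dist v (α v):ℝ)^p := mul_le_mul_of_nonneg_left hα hlam0
      _ ≤ 2^(p-1) * (L₁*L₂)^p * ∑ v, (G.deg v:ℝ) := core
      _ ≤ 2^(p-1) * (L₁*L₂)^p * ((Fintype.card G.V : ℝ) * (G.maxDeg:ℝ)) :=
          mul_le_mul_of_nonneg_left hdegsum (by positivity)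
  have htp : (0:ℝ) < (t:ℝ)^p := Real.rpow_pos_of_pos htpos _
  have h6 : G.lam1 X p ≤ 2^p * (L₁*L₂)^p * (G.maxDeg:ℝ) / (t:ℝ)^p := by
    rw [le_div_iff₀ htp]
    have h2p : (2:ℝ)^(p-1) * 2 = 2^p := by
      rw [← Real.rpow_add_one (by norm_num : (2:ℝ) ≠ 0) (p-1)]
      norm_num
    have hkey : (G.lam1 X p * (t:ℝ)^p) * ((Fintype.card G.V : ℝ)/2)
        ≤ (2^p * (L₁*L₂)^p * (G.maxDeg:ℝ)) * ((Fintype.card G.V : ℝ)/2) := by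
      calc (G.lam1 X p * (t:ℝ)^p) * ((Fintype.card G.V : ℝ)/2)
          = G.lam1 X p * ((Fintype.card G.V : ℝ)/2 * (t:ℝ)^p) := by ring
        _ ≤ 2^(p-1) * (L₁*L₂)^p * ((Fintype.card G.V : ℝ) * (G.maxDeg:ℝ)) := h5
        _ = (2^(p-1) * 2) * (L₁*L₂)^p * (G.maxDeg:ℝ) * ((Fintype.card G.V : ℝ)/2) := by ring
        _ = (2^p * (L₁*L₂)^p * (G.maxDeg:ℝ)) * ((Fintype.card G.V : ℝ)/2) := by rw [h2p]
    exact le_of_mul_le_mul_right hkey (by positivity)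
  have h7 : G.lam1 X p ≤ (4:ℝ)^p * (G.maxDeg:ℝ) * ((L₁*L₂) / (G.diam:ℝ))^p := by
    have hL : (0:ℝ) < L₁*L₂ := mul_pos hL₁ hL₂
    have hmono : (L₁*L₂)/(t:ℝ) ≤ (L₁*L₂)/((G.diam:ℝ)/2) :=
      div_le_div_of_nonneg_left hL.le (by linarith) htR
    have e1 : 2^p * (L₁*L₂)^p * (G.maxDeg:ℝ) / (t:ℝ)^p
        = 2^p * (G.maxDeg:ℝ) * ((L₁*L₂)/(t:ℝ))^p := by
      rw [Real.div_rpow hL.le (le_of_lt htpos)]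
      ring
    have e2 : ((L₁*L₂)/(t:ℝ))^p ≤ ((L₁*L₂)/((G.diam:ℝ)/2))^p :=
      Real.rpow_le_rpow (by positivity) hmono hp0.le
    have e3 : (L₁*L₂)/((G.diam:ℝ)/2) = 2*(L₁*L₂)/(G.diam:ℝ) := by
      field_simp
    have e4 : (2:ℝ)^p * (2*(L₁*L₂)/(G.diam:ℝ))^p = 4^p * ((L₁*L₂)/(G.diam:ℝ))^p := by
      rw [show (2:ℝ)*(L₁*L₂)/(G.diam:ℝ) = 2 * ((L₁*L₂)/(G.diam:ℝ)) by ring]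
      rw [Real.mul_rpow (by norm_num) (by positivity)]
      rw [show (4:ℝ) = 2*2 by norm_num, Real.mul_rpow (by norm_num) (by norm_num)]
      ring
    calc G.lam1 X p ≤ 2^p * (L₁*L₂)^p * (G.maxDeg:ℝ) / (t:ℝ)^p := h6
      _ = 2^p * (G.maxDeg:ℝ) * ((L₁*L₂)/(t:ℝ))^p := e1
      _ ≤ 2^p * (G.maxDeg:ℝ) * ((L₁*L₂)/((G.diam:ℝ)/2))^p :=
          mul_le_mul_of_nonneg_left e2 (by positivity)
      _ = (G.maxDeg:ℝ) * ((2:ℝ)^p * (2*(L₁*L₂)/(G.diam:ℝ))^p) := by rw [e3]; ring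
      _ = (G.maxDeg:ℝ) * (4^p * ((L₁*L₂)/(G.diam:ℝ))^p) := by rw [e4]
      _ = 4^p * (G.maxDeg:ℝ) * ((L₁*L₂)/(G.diam:ℝ))^p := by ring
  have helper := jv_helper hp hlam0 hΔR hδR (mul_pos hL₁ hL₂)
    (by norm_num : (0:ℝ) < 4) h7
  linarith

end MultiGraph
theorem generalized_jolissaint_valette :
    (∀ (G : MultiGraph), G.Connected →
      ∀ (X : Type) (_ : NormedAddCommGroup X) (_ : NormedSpace ℝ X) (_ : CompleteSpace X)
        (p : ℝ), 1 ≤ p →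
        (2:ℝ) ^ (-(p-1)/p) * (G.maxDisp : ℝ) * (G.lam1 X p / G.avgDeg) ^ (1/p)
          ≤ G.distortion X) ∧
    (∃ c : ℝ, 0 < c ∧ ∀ (G : MultiGraph), G.Connected → G.IsVertexTransitive →
      ∀ (X : Type) (_ : NormedAddCommGroup X) (_ : NormedSpace ℝ X) (_ : CompleteSpace X)
        (p : ℝ), 1 ≤ p →
        c * (G.diam : ℝ) * (G.lam1 X p / (G.maxDeg : ℝ)) ^ (1/p) ≤ G.distortion X) := by
  constructor
  · intro G hc X i1 i2 _ p hp
    exact @MultiGraph.jv_part1 G hc X i1 i2 p hp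
  · refine ⟨1/4, by norm_num, ?_⟩
    intro G hc ht X i1 i2 _ p hp
    exact @MultiGraph.jv_part2 G hc ht X i1 i2 p hp
end

section
/- Let {G_n} be a sequence of finite connected graphs (possibly with unbounded degrees) such that the automorphism group of each G_n acts transitively on its vertex set, diam(G_n) → ∞ as n → ∞, and inf_n λ₁(G_n;X,p)/Δ(G_n) > 0 for some real Banach space X and some p ∈ [1,∞). Then no coarse disjoint union ∐_n G_n admits a coarse embedding into X. -/
open scoped ENNReal

/-- A coarse disjoint union of the family of graphs `G n`: a metric on the disjoint
union of the vertex sets restricting to the path metric on each piece, with the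
pieces spread far apart. -/
structure CoarseDisjointUnion (G : ℕ → MultiGraph) where
  d : (Σ n, (G n).V) → (Σ n, (G n).V) → ℝ
  symm : ∀ x y, d x y = d y x
  triangle : ∀ x y z, d x z ≤ d x y + d y z
  eq_zero_iff : ∀ x y, d x y = 0 ↔ x = y
  restrict : ∀ (n : ℕ) (v w : (G n).V), d ⟨n, v⟩ ⟨n, w⟩ = ((G n).dist v w : ℝ)
  separated : ∀ (k n : ℕ), k ≠ n → ∀ (v : (G k).V) (w : (G n).V),
    (((G k).diam : ℝ) + ((G n).diam : ℝ) + k + n) ≤ d ⟨k, v⟩ ⟨n, w⟩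
private lemma rpow_add_le_aux {p : ℝ} (hp : 1 ≤ p) {a b : ℝ} (ha : 0 ≤ a) (hb : 0 ≤ b) :
    (a + b) ^ p ≤ 2 ^ p * (a ^ p + b ^ p) := by
  have hp0 : (0:ℝ) ≤ p := zero_le_one.trans hp
  have hmax : (0:ℝ) ≤ max a b := le_max_of_le_left ha
  have h1 : a + b ≤ 2 * max a b := by
    rcases le_total a b with h | h
    · rw [max_eq_right h]; linarith
    · rw [max_eq_left h]; linarith
  calc (a + b) ^ p ≤ (2 * max a b) ^ p := Real.rpow_le_rpow (by linarith) h1 hp0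
    _ = 2 ^ p * (max a b) ^ p := Real.mul_rpow (by norm_num) hmax
    _ ≤ 2 ^ p * (a ^ p + b ^ p) := by
        refine mul_le_mul_of_nonneg_left ?_ (Real.rpow_nonneg (by norm_num) p)
        rcases le_total a b with h | h
        · rw [max_eq_right h]
          have := Real.rpow_nonneg ha p
          linarith
        · rw [max_eq_left h]
          have := Real.rpow_nonneg hb p
          linarith

private lemma MultiGraph.dist_perm (G : MultiGraph) (hc : G.Connected)
    {α : Equiv.Perm G.V} (hα : ∀ a b, G.m (α a) (α b) = G.m a b)
    (v w : G.V) : G.dist (α v) (α w) = G.dist v w := by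
  have key : ∀ (β : Equiv.Perm G.V), (∀ a b, G.m (β a) (β b) = G.m a b) →
      ∀ v w : G.V, G.toSimple.dist (β v) (β w) ≤ G.toSimple.dist v w := by
    intro β hβ v w
    obtain ⟨q, hq⟩ := hc.exists_walk_length_eq_dist v w
    have h := SimpleGraph.dist_le (q.map
      (⟨β, fun {a b} (hab : a ≠ b ∧ 0 < G.m a b) => (⟨fun h => hab.1 (β.injective h), by rw [hβ]; exact hab.2⟩ : β a ≠ β b ∧ 0 < G.m (β a) (β b))⟩ :
        G.toSimple →g G.toSimple))
    rwa [SimpleGraph.Walk.length_map, hq] at h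
  have hα' : ∀ a b, G.m (α⁻¹ a) (α⁻¹ b) = G.m a b := by
    intro a b
    conv_rhs => rw [← (Equiv.apply_symm_apply α a : α (α⁻¹ a) = a), ← (Equiv.apply_symm_apply α b : α (α⁻¹ b) = b), hα]
    rfl
  show G.toSimple.dist (α v) (α w) = G.toSimple.dist v w
  refine le_antisymm (key α hα v w) ?_
  have h := key α⁻¹ hα' (α v) (α w)
  simpa using h

private lemma MultiGraph.ball_card_le (G : MultiGraph) (hc : G.Connected)
    (ht : G.IsVertexTransitive) {r : ℕ} (hr : 2 * r + 1 ≤ G.diam) (v : G.V) :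
    2 * (Finset.univ.filter fun w => G.dist v w ≤ r).card ≤ Fintype.card G.V := by
  classical
  haveI hne : Nonempty G.V := hc.nonempty
  obtain ⟨q, -, hq⟩ := Finset.exists_mem_eq_sup (Finset.univ : Finset (G.V × G.V))
    Finset.univ_nonempty (fun q : G.V × G.V => G.dist q.1 q.2)
  obtain ⟨u, u'⟩ := q
  have hduu : 2 * r + 1 ≤ G.dist u u' := by
    have : G.diam = G.dist u u' := hq
    omega
  have hcard : ∀ a b : G.V, (Finset.univ.filter fun w => G.dist a w ≤ r).card =
      (Finset.univ.filter fun w => G.dist b w ≤ r).card := by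
    intro a b
    obtain ⟨α, hα, hab⟩ := ht a b
    apply Finset.card_bij (fun w _ => α w)
    · intro w hw
      simp only [Finset.mem_filter, Finset.mem_univ, true_and] at hw ⊢
      rw [← hab, G.dist_perm hc hα]
      exact hw
    · intro w₁ _ w₂ _ h
      exact α.injective h
    · intro y hy
      simp only [Finset.mem_filter, Finset.mem_univ, true_and] at hy
      refine ⟨α.symm y, ?_, Equiv.apply_symm_apply α y⟩
      simp only [Finset.mem_filter, Finset.mem_univ, true_and]
      have h2 : G.dist a (α.symm y) = G.dist b y := by
        rw [← G.dist_perm hc hα a (α.symm y), hab, Equiv.apply_symm_apply]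
      rw [h2]; exact hy
  have hdisj : Disjoint (Finset.univ.filter fun w => G.dist u w ≤ r)
      (Finset.univ.filter fun w => G.dist u' w ≤ r) := by
    rw [Finset.disjoint_left]
    intro w hw hw'
    simp only [Finset.mem_filter, Finset.mem_univ, true_and] at hw hw'
    have h1 : G.dist u u' ≤ G.dist u w + G.dist u' w := by
      have h2 : G.toSimple.dist u u' ≤ G.toSimple.dist u w + G.toSimple.dist u' w := by
        calc G.toSimple.dist u u' ≤ G.toSimple.dist u w + G.toSimple.dist w u' :=
              SimpleGraph.Connected.dist_triangle hc
          _ = G.toSimple.dist u w + G.toSimple.dist u' w := by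
              rw [SimpleGraph.dist_comm (u := w) (v := u')]
      exact h2
    omega
  have hunion := Finset.card_union_of_disjoint hdisj
  have hle : ((Finset.univ.filter fun w => G.dist u w ≤ r) ∪
      (Finset.univ.filter fun w => G.dist u' w ≤ r)).card ≤ Fintype.card G.V := by
    rw [← Finset.card_univ]
    exact Finset.card_le_card (Finset.subset_univ _)
  have := hcard v u
  have := hcard v u'
  omega
theorem no_coarse_embedding_of_vertex_transitive_anders
    (G : ℕ → MultiGraph) (hconn : ∀ n, (G n).Connected)
    (htrans : ∀ n, (G n).IsVertexTransitive)
    (hdiam : Filter.Tendsto (fun n => ((G n).diam : ℝ)) Filter.atTop Filter.atTop)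
    (X : Type*) [NormedAddCommGroup X] [NormedSpace ℝ X] [CompleteSpace X]
    (p : ℝ) (hp : 1 ≤ p)
    (hgap : ∃ ε : ℝ, 0 < ε ∧ ∀ n, ε ≤ (G n).lam1 X p / ((G n).maxDeg : ℝ))
    (U : CoarseDisjointUnion G) :
    ¬ ∃ (f : (Σ n, (G n).V) → X) (L : ℝ) (ρ : ℝ → ℝ), 0 < L ∧
      (∀ s t, 0 ≤ s → s ≤ t → ρ s ≤ ρ t) ∧
      Filter.Tendsto ρ Filter.atTop Filter.atTop ∧
      (∀ x y, ‖f x - f y‖ ≤ L * U.d x y) ∧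
      (∀ x y, ρ (U.d x y) ≤ ‖f x - f y‖) := by
  rintro ⟨f, L, ρ, hL, hmono, hρ, hLip, hlow⟩
  obtain ⟨ε, hε, hgapn⟩ := hgap
  have hp0 : (0:ℝ) < p := lt_of_lt_of_le one_pos hp
  have hLp : (0:ℝ) < L ^ p := Real.rpow_pos_of_pos hL p
  set C : ℝ := 2 ^ (p+1) * L ^ p / ε with hC_def
  have hC : 0 < C := div_pos (mul_pos (Real.rpow_pos_of_pos two_pos _) hLp) hε
  set B : ℝ := C ^ p⁻¹ with hB_def
  have hB : 0 ≤ B := Real.rpow_nonneg hC.le _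
  obtain ⟨N, hN⟩ := Filter.eventually_atTop.mp (Filter.tendsto_atTop.mp hρ (B + 1))
  set K : ℕ := ⌈N⌉₊ with hK_def
  obtain ⟨n, hn⟩ := Filter.eventually_atTop.mp
    (Filter.tendsto_atTop.mp hdiam ((2 * K + 1 : ℕ) : ℝ))
  have hDn : 2 * K + 1 ≤ (G n).diam := by exact_mod_cast hn n le_rfl
  set g : (G n).V → X := fun v => f ⟨n, v⟩ with hg_def
  have hCn : (G n).toSimple.Connected := hconn n
  haveI : Nonempty (G n).V := hCn.nonempty
  have hVpos : (0:ℝ) < (Fintype.card (G n).V : ℝ) := by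
    exact_mod_cast Fintype.card_pos
  set cV : ℝ := (Fintype.card (G n).V : ℝ) with hcV_def
  have hρK : B + 1 ≤ ρ (K : ℝ) := hN _ (Nat.le_ceil N)
  have hρKpos : 0 < ρ (K:ℝ) := by linarith
  have hpair : ∀ v w : (G n).V, (K : ℝ) < ((G n).dist v w : ℝ) → ρ (K:ℝ) ≤ ‖g v - g w‖ := by
    intro v w h
    have h1 := hlow ⟨n, v⟩ ⟨n, w⟩
    rw [U.restrict] at h1
    exact le_trans (hmono _ _ (Nat.cast_nonneg K) h.le) h1
  -- a pair at maximal distance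
  obtain ⟨q, -, hq⟩ := Finset.exists_mem_eq_sup (Finset.univ : Finset ((G n).V × (G n).V))
    Finset.univ_nonempty (fun q : (G n).V × (G n).V => (G n).dist q.1 q.2)
  obtain ⟨u, u'⟩ := q
  have hquu : 2 * K + 1 ≤ (G n).dist u u' := by
    have : (G n).diam = (G n).dist u u' := hq
    omega
  have hguu' : ρ (K:ℝ) ≤ ‖g u - g u'‖ := by
    refine hpair u u' ?_
    exact_mod_cast Nat.lt_of_lt_of_le (by omega) hquu
  have hgne : g u ≠ g u' := by
    intro h; rw [h, sub_self, norm_zero] at hguu'; linarith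
  have huu' : u ≠ u' := fun h => hgne (by rw [h])
  -- max degree is at least 1
  have hΔ1 : 1 ≤ (G n).maxDeg := by
    obtain ⟨wk⟩ := hCn.preconnected u u'
    cases wk with
    | nil => exact absurd rfl huu'
    | @cons _ x _ h pth =>
      have hm : 0 < (G n).m u x := (h : u ≠ x ∧ 0 < (G n).m u x).2
      have h1 : (G n).m u x ≤ (G n).deg u :=
        Finset.single_le_sum (fun i _ => Nat.zero_le _) (Finset.mem_univ x)
      have h2 : (G n).deg u ≤ (G n).maxDeg := Finset.le_sup (Finset.mem_univ u)
      omega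
  set Δr : ℝ := ((G n).maxDeg : ℝ) with hΔr_def
  have hΔrpos : (0:ℝ) < Δr := by
    have h0 : 0 < (G n).maxDeg := hΔ1
    rw [hΔr_def]
    exact_mod_cast h0
  set m0 : X := (G n).mean g with hm0_def
  set S : ℝ := ∑ v, ‖g v - m0‖ ^ p with hS_def
  set E : ℝ := ∑ v, ∑ w, ((G n).m v w : ℝ) * ‖g w - g v‖ ^ p with hE_def
  have hSpos : 0 < S := by
    have hex : ∃ v, g v ≠ m0 := by
      by_contra h
      push_neg at h
      exact hgne ((h u).trans (h u').symm)
    obtain ⟨v₀, hv₀⟩ := hex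
    refine Finset.sum_pos' (fun i _ => Real.rpow_nonneg (norm_nonneg _) p)
      ⟨v₀, Finset.mem_univ v₀, Real.rpow_pos_of_pos ?_ p⟩
    rw [norm_pos_iff, sub_ne_zero]
    exact hv₀
  have hE_le : E ≤ cV * (Δr * L ^ p) := by
    rw [hE_def]
    have hinner : ∀ v : (G n).V, ∑ w, ((G n).m v w : ℝ) * ‖g w - g v‖ ^ p ≤ Δr * L ^ p := by
      intro v
      have hterm : ∀ w : (G n).V, ((G n).m v w : ℝ) * ‖g w - g v‖ ^ p ≤
          ((G n).m v w : ℝ) * L ^ p := by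
        intro w
        by_cases hm0' : (G n).m v w = 0
        · rw [hm0']; simp
        · refine mul_le_mul_of_nonneg_left ?_ (Nat.cast_nonneg _)
          by_cases hvw : v = w
          · subst hvw
            rw [sub_self, norm_zero, Real.zero_rpow (ne_of_gt hp0)]
            exact hLp.le
          · have hadj : (G n).toSimple.Adj w v := by
              refine (⟨Ne.symm hvw, ?_⟩ : w ≠ v ∧ 0 < (G n).m w v)
              rw [(G n).symm]
              omega
            have hd1 : (G n).toSimple.dist w v = 1 := SimpleGraph.dist_eq_one_iff_adj.mpr hadj
            have hlip := hLip ⟨n, w⟩ ⟨n, v⟩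
            rw [U.restrict] at hlip
            have hdd : ((G n).dist w v : ℝ) = 1 := by
              have h1' : (G n).dist w v = 1 := hd1
              exact_mod_cast h1'
            rw [hdd, mul_one] at hlip
            exact Real.rpow_le_rpow (norm_nonneg _) hlip hp0.le
      calc ∑ w, ((G n).m v w : ℝ) * ‖g w - g v‖ ^ p ≤ ∑ w, ((G n).m v w : ℝ) * L ^ p :=
            Finset.sum_le_sum (fun w _ => hterm w)
        _ = ((G n).deg v : ℝ) * L ^ p := by
            rw [← Finset.sum_mul, MultiGraph.deg]
            push_cast
            ring
        _ ≤ Δr * L ^ p := by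
            refine mul_le_mul_of_nonneg_right ?_ hLp.le
            rw [hΔr_def]
            exact_mod_cast Finset.le_sup (Finset.mem_univ v)
    calc ∑ v, ∑ w, ((G n).m v w : ℝ) * ‖g w - g v‖ ^ p ≤
        ∑ _v : (G n).V, (Δr * L ^ p) := Finset.sum_le_sum (fun v _ => hinner v)
      _ = cV * (Δr * L ^ p) := by
          rw [Finset.sum_const, Finset.card_univ, nsmul_eq_mul]
  -- spectral gap inequality
  have hmem : E / S ∈ {r : ℝ | ∃ f0 : (G n).V → X, (¬ ∀ v w, f0 v = f0 w) ∧
      r = (∑ v, ∑ w, ((G n).m v w : ℝ) * ‖f0 w - f0 v‖ ^ p) /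
        (∑ v, ‖f0 v - (G n).mean f0‖ ^ p)} := by
    refine ⟨g, fun h => hgne (h u u'), ?_⟩
    rw [hE_def, hS_def, hm0_def]
  have hbdd : BddBelow {r : ℝ | ∃ f0 : (G n).V → X, (¬ ∀ v w, f0 v = f0 w) ∧
      r = (∑ v, ∑ w, ((G n).m v w : ℝ) * ‖f0 w - f0 v‖ ^ p) /
        (∑ v, ‖f0 v - (G n).mean f0‖ ^ p)} := by
    refine ⟨0, ?_⟩
    rintro r ⟨f0, -, rfl⟩
    refine div_nonneg (Finset.sum_nonneg fun v _ => Finset.sum_nonneg fun w _ =>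
      mul_nonneg (Nat.cast_nonneg _) (Real.rpow_nonneg (norm_nonneg _) p))
      (Finset.sum_nonneg fun v _ => Real.rpow_nonneg (norm_nonneg _) p)
  have hlam : (G n).lam1 X p ≤ (1/2) * (E / S) := by
    rw [MultiGraph.lam1]
    exact mul_le_mul_of_nonneg_left (csInf_le hbdd hmem) (by norm_num)
  have hgap' : ε * Δr ≤ (G n).lam1 X p := by
    have h := hgapn n
    rw [le_div_iff₀ hΔrpos] at h
    exact h
  have hES : 2 * (ε * Δr) * S ≤ E := by
    have h1 : ε * Δr ≤ E / (2 * S) := by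
      have he : (1/2) * (E/S) = E / (2*S) := by
        field_simp
      linarith [hgap'.trans hlam, he]
    rw [le_div_iff₀ (by linarith)] at h1
    linarith
  have hS_le : S ≤ cV * L ^ p / (2 * ε) := by
    rw [le_div_iff₀ (by linarith)]
    have h2 : Δr * (S * (2 * ε)) ≤ Δr * (cV * L ^ p) := by nlinarith
    exact (mul_le_mul_iff_right₀ hΔrpos).mp h2
  -- counting lower bound
  have hball : ∀ v : (G n).V,
      cV / 2 ≤ ((Finset.univ.filter fun w => ¬ (G n).dist v w ≤ K).card : ℝ) := by
    intro v
    have h1 := (G n).ball_card_le (hconn n) (htrans n) hDn v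
    have h2 := Finset.card_filter_add_card_filter_not
      (s := (Finset.univ : Finset (G n).V)) (p := fun w => (G n).dist v w ≤ K)
    rw [Finset.card_univ] at h2
    have h3 : Fintype.card (G n).V ≤
        2 * (Finset.univ.filter fun w => ¬ (G n).dist v w ≤ K).card := by omega
    rw [div_le_iff₀ two_pos, hcV_def]
    calc (Fintype.card (G n).V : ℝ) ≤
        (2 * (Finset.univ.filter fun w => ¬ (G n).dist v w ≤ K).card : ℕ) := by
          exact_mod_cast h3
      _ = ((Finset.univ.filter fun w => ¬ (G n).dist v w ≤ K).card : ℝ) * 2 := by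
          push_cast; ring
  set S2 : ℝ := ∑ v, ∑ w, ‖g v - g w‖ ^ p with hS2_def
  have hS2_low : cV * (cV / 2 * ρ (K:ℝ) ^ p) ≤ S2 := by
    rw [hS2_def]
    have hinner : ∀ v : (G n).V, cV / 2 * ρ (K:ℝ) ^ p ≤ ∑ w, ‖g v - g w‖ ^ p := by
      intro v
      have h1 : ∀ w ∈ (Finset.univ.filter fun w => ¬ (G n).dist v w ≤ K),
          ρ (K:ℝ) ^ p ≤ ‖g v - g w‖ ^ p := by
        intro w hw
        rw [Finset.mem_filter] at hw
        have hd : (K : ℝ) < ((G n).dist v w : ℝ) := by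
          exact_mod_cast Nat.lt_of_not_le hw.2
        exact Real.rpow_le_rpow hρKpos.le (hpair v w hd) hp0.le
      calc cV / 2 * ρ (K:ℝ) ^ p ≤
          ((Finset.univ.filter fun w => ¬ (G n).dist v w ≤ K).card : ℝ) * ρ (K:ℝ) ^ p :=
            mul_le_mul_of_nonneg_right (hball v) (Real.rpow_nonneg hρKpos.le p)
        _ = ∑ _w ∈ (Finset.univ.filter fun w => ¬ (G n).dist v w ≤ K), ρ (K:ℝ) ^ p := by
            rw [Finset.sum_const, nsmul_eq_mul]
        _ ≤ ∑ w ∈ (Finset.univ.filter fun w => ¬ (G n).dist v w ≤ K), ‖g v - g w‖ ^ p :=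
            Finset.sum_le_sum h1
        _ ≤ ∑ w, ‖g v - g w‖ ^ p :=
            Finset.sum_le_sum_of_subset_of_nonneg (Finset.filter_subset _ _)
              (fun i _ _ => Real.rpow_nonneg (norm_nonneg _) p)
    calc cV * (cV / 2 * ρ (K:ℝ) ^ p) = ∑ _v : (G n).V, (cV / 2 * ρ (K:ℝ) ^ p) := by
          rw [Finset.sum_const, Finset.card_univ, nsmul_eq_mul]
      _ ≤ ∑ v, ∑ w, ‖g v - g w‖ ^ p := Finset.sum_le_sum (fun v _ => hinner v)
  have hS2_up : S2 ≤ 2 ^ p * (cV * S) + 2 ^ p * (cV * S) := by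
    rw [hS2_def]
    have key : ∀ v w : (G n).V, ‖g v - g w‖ ^ p ≤
        2 ^ p * (‖g v - m0‖ ^ p + ‖g w - m0‖ ^ p) := by
      intro v w
      have h1 : ‖g v - g w‖ ≤ ‖g v - m0‖ + ‖g w - m0‖ := by
        have he : g v - g w = (g v - m0) - (g w - m0) := by abel
        rw [he]
        exact norm_sub_le _ _
      calc ‖g v - g w‖ ^ p ≤ (‖g v - m0‖ + ‖g w - m0‖) ^ p :=
            Real.rpow_le_rpow (norm_nonneg _) h1 hp0.le
        _ ≤ 2 ^ p * (‖g v - m0‖ ^ p + ‖g w - m0‖ ^ p) :=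
            rpow_add_le_aux hp (norm_nonneg _) (norm_nonneg _)
    calc ∑ v, ∑ w, ‖g v - g w‖ ^ p ≤
        ∑ v, ∑ w, 2 ^ p * (‖g v - m0‖ ^ p + ‖g w - m0‖ ^ p) :=
          Finset.sum_le_sum fun v _ => Finset.sum_le_sum fun w _ => key v w
      _ = 2 ^ p * (cV * S) + 2 ^ p * (cV * S) := by
          simp only [mul_add, Finset.sum_add_distrib, Finset.sum_const, Finset.card_univ,
            nsmul_eq_mul, ← Finset.mul_sum]
          rw [← hS_def]
          ring
  have hfin : cV * (cV / 2 * ρ (K:ℝ) ^ p) ≤ cV * (cV / 2 * C) := by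
    have h0 : (0:ℝ) ≤ 2 ^ p := (Real.rpow_pos_of_pos two_pos p).le
    calc cV * (cV / 2 * ρ (K:ℝ) ^ p) ≤ S2 := hS2_low
      _ ≤ 2 ^ p * (cV * S) + 2 ^ p * (cV * S) := hS2_up
      _ ≤ 2 ^ p * (cV * (cV * L ^ p / (2 * ε))) + 2 ^ p * (cV * (cV * L ^ p / (2 * ε))) := by
          have h1 : cV * S ≤ cV * (cV * L ^ p / (2 * ε)) :=
            mul_le_mul_of_nonneg_left hS_le hVpos.le
          have h2 := mul_le_mul_of_nonneg_left h1 h0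
          linarith
      _ = cV * (cV / 2 * C) := by
          rw [hC_def, Real.rpow_add_one (by norm_num : (2:ℝ) ≠ 0)]
          field_simp
          ring
  have hρC : ρ (K:ℝ) ^ p ≤ C := by
    have hA : (0:ℝ) < cV * (cV / 2) := by
      have : (0:ℝ) < cV / 2 := by linarith
      exact mul_pos hVpos this
    rw [show cV * (cV / 2 * ρ (K:ℝ) ^ p) = cV * (cV / 2) * ρ (K:ℝ) ^ p by ring,
      show cV * (cV / 2 * C) = cV * (cV / 2) * C by ring] at hfin
    exact (mul_le_mul_iff_right₀ hA).mp hfin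
  have hBp : B ^ p = C := Real.rpow_inv_rpow hC.le (ne_of_gt hp0)
  have hlt : C < ρ (K:ℝ) ^ p := by
    rw [← hBp]
    exact Real.rpow_lt_rpow hB (by linarith) hp0
  linarith
end

section
/- Let X be a uniformly convex real Banach space and p,q ∈ (1,∞). Then ℓ_p(ℕ,X) and ℓ_q(ℕ,X) are sphere equivalent; moreover, there exists a uniform homeomorphism Φ:S(ℓ_p(ℕ,X)) → S(ℓ_q(ℕ,X)) which is Sym(ℕ)-equivariant, i.e., Φ∘σ_{X,p} = σ_{X,q}∘Φ for every permutation σ of ℕ, where σ_{X,r} denotes the isometry of ℓ_r(ℕ,X) given by (σ_{X,r}ξ)(n) := ξ(σ⁻¹(n)). -/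
open scoped ENNReal

noncomputable section

namespace MazurAux

variable {X : Type*} [NormedAddCommGroup X] [NormedSpace ℝ X]

/-- The pointwise Mazur map `x ↦ ‖x‖^(α-1) • x`. -/
def mz (α : ℝ) (x : X) : X := (‖x‖ ^ (α - 1)) • x

@[simp] lemma mz_zero (α : ℝ) : mz α (0 : X) = 0 := by simp [mz]

lemma mz_one (x : X) : mz 1 x = x := by simp [mz]

lemma norm_mz (α : ℝ) (hα : 0 < α) (x : X) : ‖mz α x‖ = ‖x‖ ^ α := by
  rcases eq_or_ne x 0 with rfl | hx
  · simp [Real.zero_rpow hα.ne']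
  · have hnx : (0:ℝ) < ‖x‖ := norm_pos_iff.2 hx
    rw [mz, norm_smul, Real.norm_eq_abs, abs_of_nonneg (Real.rpow_nonneg hnx.le _),
      ← Real.rpow_add_one hnx.ne', sub_add_cancel]

lemma mz_mz (α β : ℝ) (hα : 0 < α) (x : X) : mz β (mz α x) = mz (α * β) x := by
  rcases eq_or_ne x 0 with rfl | hx
  · simp
  · have hnx : (0:ℝ) < ‖x‖ := norm_pos_iff.2 hx
    rw [mz, norm_mz α hα, mz, mz, smul_smul]
    congr 1
    rw [← Real.rpow_mul hnx.le, ← Real.rpow_add hnx]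
    congr 1
    ring

/-- Scalar key inequality: `(r^γ - s^γ) * s ≤ γ * r^γ * (r - s)` for `0 ≤ s ≤ r`, `0 ≤ γ`. -/
lemma scalar_key {r s γ : ℝ} (hs : 0 ≤ s) (hsr : s ≤ r) (hγ : 0 ≤ γ) :
    (r ^ γ - s ^ γ) * s ≤ γ * r ^ γ * (r - s) := by
  rcases eq_or_lt_of_le hs with rfl | hs
  · simp
    positivity
  have hr : (0:ℝ) < r := lt_of_lt_of_le hs hsr
  have hsrpos : (0:ℝ) < s / r := div_pos hs hr
  -- (s/r)^γ ≥ 1 + γ * log (s/r)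
  have h1 : γ * Real.log (s / r) + 1 ≤ (s / r) ^ γ := by
    rw [Real.rpow_def_of_pos hsrpos, mul_comm γ]
    exact Real.add_one_le_exp _
  have h2 : s ^ γ = r ^ γ * (s / r) ^ γ := by
    rw [← Real.mul_rpow hr.le (le_of_lt hsrpos), mul_div_cancel₀ _ hr.ne']
  -- log (r/s) ≤ (r-s)/s
  have h3 : Real.log (r / s) ≤ r / s - 1 := Real.log_le_sub_one_of_pos (div_pos hr hs)
  have h4 : Real.log (s / r) = - Real.log (r / s) := by
    rw [← Real.log_inv]
    congr 1
    field_simp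
  have hrg : (0:ℝ) ≤ r ^ γ := Real.rpow_nonneg hr.le γ
  have h5 : r ^ γ - s ^ γ ≤ γ * r ^ γ * Real.log (r / s) := by
    rw [h4] at h1
    rw [h2]
    nlinarith [mul_le_mul_of_nonneg_left h1 hrg]
  calc (r ^ γ - s ^ γ) * s ≤ (γ * r ^ γ * Real.log (r / s)) * s := by
        apply mul_le_mul_of_nonneg_right h5 hs.le
      _ ≤ (γ * r ^ γ * (r / s - 1)) * s := by
        apply mul_le_mul_of_nonneg_right _ hs.le
        exact mul_le_mul_of_nonneg_left h3 (by positivity)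
      _ = γ * r ^ γ * (r - s) := by field_simp


/-- Decomposition lemma. -/
lemma mz_sub (α : ℝ) (x y : X) :
    mz α x - mz α y = (‖x‖ ^ (α-1)) • (x - y) + ((‖x‖ ^ (α-1)) - (‖y‖ ^ (α-1))) • y := by
  simp [mz, smul_sub, sub_smul]

attribute [irreducible] mz

/-- Lipschitz-type estimate for `α ≥ 1`, assuming `‖y‖ ≤ ‖x‖`. -/
lemma mz_est_ge_aux {α : ℝ} (hα : 1 ≤ α) (x y : X) (hyx : ‖y‖ ≤ ‖x‖) :
    ‖mz α x - mz α y‖ ≤ α * ‖x‖ ^ (α - 1) * ‖x - y‖ := by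
  have hγ : (0:ℝ) ≤ α - 1 := by linarith
  have hd : ‖x‖ - ‖y‖ ≤ ‖x - y‖ := norm_sub_norm_le x y
  calc ‖mz α x - mz α y‖
      ≤ ‖x‖ ^ (α-1) * ‖x - y‖ + (‖x‖ ^ (α-1) - ‖y‖ ^ (α-1)) * ‖y‖ := by
        rw [mz_sub]
        refine (norm_add_le _ _).trans ?_
        rw [norm_smul, norm_smul, Real.norm_eq_abs, Real.norm_eq_abs,
          abs_of_nonneg (Real.rpow_nonneg (norm_nonneg x) _),
          abs_of_nonneg (by
            have := Real.rpow_le_rpow (norm_nonneg y) hyx hγ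
            linarith : (0:ℝ) ≤ ‖x‖ ^ (α-1) - ‖y‖ ^ (α-1))]
    _ ≤ ‖x‖ ^ (α-1) * ‖x - y‖ + (α - 1) * ‖x‖ ^ (α-1) * (‖x‖ - ‖y‖) := by
        have := scalar_key (norm_nonneg y) hyx hγ
        linarith
    _ ≤ ‖x‖ ^ (α-1) * ‖x - y‖ + (α - 1) * ‖x‖ ^ (α-1) * ‖x - y‖ := by
        have h1 : (0:ℝ) ≤ (α - 1) * ‖x‖ ^ (α-1) := by positivity
        nlinarith
    _ = α * ‖x‖ ^ (α - 1) * ‖x - y‖ := by ring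

/-- Lipschitz-type estimate for `α ≥ 1`. -/
lemma mz_est_ge {α : ℝ} (hα : 1 ≤ α) (x y : X) :
    ‖mz α x - mz α y‖ ≤ α * (max ‖x‖ ‖y‖) ^ (α - 1) * ‖x - y‖ := by
  rcases le_total ‖y‖ ‖x‖ with h | h
  · rw [max_eq_left h]; exact mz_est_ge_aux hα x y h
  · rw [max_eq_right h, ← norm_neg (mz α x - mz α y), neg_sub, ← norm_neg (x - y), neg_sub]
    exact mz_est_ge_aux hα y x h

/-- Hölder estimate for `0 < α ≤ 1`, assuming `‖y‖ ≤ ‖x‖`. -/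
lemma mz_est_le_aux {α : ℝ} (hα0 : 0 < α) (hα : α ≤ 1) (x y : X) (hyx : ‖y‖ ≤ ‖x‖) :
    ‖mz α x - mz α y‖ ≤ 2 * ‖x - y‖ ^ α := by
  rcases eq_or_ne x y with rfl | hxy
  · simp [Real.zero_rpow hα0.ne']
  have hd : (0:ℝ) < ‖x - y‖ := by
    rw [norm_pos_iff, sub_ne_zero]; exact hxy
  rcases le_or_gt ‖x‖ ‖x - y‖ with hcase | hcase
  · -- small norms case
    calc ‖mz α x - mz α y‖ ≤ ‖mz α x‖ + ‖mz α y‖ := norm_sub_le _ _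
      _ = ‖x‖ ^ α + ‖y‖ ^ α := by rw [norm_mz α hα0, norm_mz α hα0]
      _ ≤ ‖x - y‖ ^ α + ‖x - y‖ ^ α := by
          have h1 := Real.rpow_le_rpow (norm_nonneg x) hcase hα0.le
          have h2 := Real.rpow_le_rpow (norm_nonneg y) (hyx.trans hcase) hα0.le
          linarith
      _ = 2 * ‖x - y‖ ^ α := by ring
  · -- main case
    have hx : (0:ℝ) < ‖x‖ := hd.trans hcase
    have hy : (0:ℝ) < ‖y‖ := by
      have := norm_sub_norm_le x y
      linarith
    have hγ : α - 1 ≤ 0 := by linarith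
    have key1 : ‖x‖ ^ (α-1) ≤ ‖x - y‖ ^ (α-1) :=
      Real.rpow_le_rpow_of_nonpos hd hcase.le hγ
    have key2 : (‖y‖ ^ (α-1) - ‖x‖ ^ (α-1)) * ‖y‖ ≤ ‖x‖ ^ (α-1) * ‖x - y‖ := by
      have e1 : ‖y‖ ^ (α-1) * ‖y‖ = ‖y‖ ^ α := by
        rw [← Real.rpow_add_one hy.ne', sub_add_cancel]
      have e2 : ‖x‖ ^ (α-1) * ‖x‖ = ‖x‖ ^ α := by
        rw [← Real.rpow_add_one hx.ne', sub_add_cancel]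
      have e3 : ‖y‖ ^ α ≤ ‖x‖ ^ α := Real.rpow_le_rpow hy.le hyx hα0.le
      have e4 : ‖x‖ - ‖y‖ ≤ ‖x - y‖ := norm_sub_norm_le x y
      have e5 : (0:ℝ) ≤ ‖x‖ ^ (α-1) := Real.rpow_nonneg hx.le _
      nlinarith
    calc ‖mz α x - mz α y‖
        ≤ ‖x‖ ^ (α-1) * ‖x - y‖ + (‖y‖ ^ (α-1) - ‖x‖ ^ (α-1)) * ‖y‖ := by
          rw [mz_sub]
          refine (norm_add_le _ _).trans ?_
          rw [norm_smul, norm_smul, Real.norm_eq_abs, Real.norm_eq_abs,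
            abs_of_nonneg (Real.rpow_nonneg (norm_nonneg x) _)]
          have : |‖x‖ ^ (α-1) - ‖y‖ ^ (α-1)| = ‖y‖ ^ (α-1) - ‖x‖ ^ (α-1) := by
            rw [abs_sub_comm]
            exact abs_of_nonneg (by
              have := Real.rpow_le_rpow_of_nonpos hy hyx hγ
              linarith)
          rw [this]
      _ ≤ ‖x‖ ^ (α-1) * ‖x - y‖ + ‖x‖ ^ (α-1) * ‖x - y‖ := by linarith
      _ ≤ ‖x - y‖ ^ (α-1) * ‖x - y‖ + ‖x - y‖ ^ (α-1) * ‖x - y‖ := by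
          gcongr
      _ = 2 * ‖x - y‖ ^ α := by
          rw [← Real.rpow_add_one hd.ne', sub_add_cancel]; ring

/-- Hölder estimate for `0 < α ≤ 1`. -/
lemma mz_est_le {α : ℝ} (hα0 : 0 < α) (hα : α ≤ 1) (x y : X) :
    ‖mz α x - mz α y‖ ≤ 2 * ‖x - y‖ ^ α := by
  rcases le_total ‖y‖ ‖x‖ with h | h
  · exact mz_est_le_aux hα0 hα x y h
  · rw [← norm_neg (mz α x - mz α y), neg_sub, ← norm_neg (x - y), neg_sub]
    exact mz_est_le_aux hα0 hα y x h


section lpLevel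

-- membership of the Mazur image
lemma memℓp_mz (p q : ℝ) (hp : 0 < p) (hq : 0 < q) (f : ∀ _ : ℕ, X)
    (hf : Memℓp f (ENNReal.ofReal p)) :
    Memℓp (fun n => mz (p/q) (f n)) (ENNReal.ofReal q) := by
  have htp : (ENNReal.ofReal p).toReal = p := ENNReal.toReal_ofReal hp.le
  have htq : (ENNReal.ofReal q).toReal = q := ENNReal.toReal_ofReal hq.le
  apply memℓp_gen
  have hsum : Summable fun n => ‖f n‖ ^ p := by
    have := (memℓp_gen_iff (by rw [htp]; exact hp)).1 hf
    rwa [htp] at this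
  refine hsum.congr fun n => ?_
  rw [htq, norm_mz _ (div_pos hp hq), ← Real.rpow_mul (norm_nonneg _),
    div_mul_cancel₀ _ hq.ne']

/-- The Mazur map from `ℓ^p(ℕ, X)` to `ℓ^q(ℕ, X)`. -/
def MZ (p q : ℝ) (hp : 0 < p) (hq : 0 < q)
    (f : lp (fun _ : ℕ => X) (ENNReal.ofReal p)) :
    lp (fun _ : ℕ => X) (ENNReal.ofReal q) :=
  ⟨fun n => mz (p/q) (f n), memℓp_mz p q hp hq f (lp.memℓp f)⟩

lemma MZ_apply (p q : ℝ) (hp : 0 < p) (hq : 0 < q)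
    (f : lp (fun _ : ℕ => X) (ENNReal.ofReal p)) (n : ℕ) :
    (MZ p q hp hq f) n = mz (p/q) (f n) := rfl

attribute [irreducible] MZ

lemma MZ_MZ (p q : ℝ) (hp : 0 < p) (hq : 0 < q)
    (f : lp (fun _ : ℕ => X) (ENNReal.ofReal p)) :
    MZ q p hq hp (MZ p q hp hq f) = f := by
  ext n
  rw [MZ_apply, MZ_apply, mz_mz _ _ (div_pos hp hq)]
  rw [div_mul_div_comm, mul_comm, div_self (by positivity), mz_one]

lemma MZ_sub_apply (p q : ℝ) (hp : 0 < p) (hq : 0 < q)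
    (f g : lp (fun _ : ℕ => X) (ENNReal.ofReal p)) (n : ℕ) :
    (MZ p q hp hq f - MZ p q hp hq g) n = mz (p/q) (f n) - mz (p/q) (g n) := by
  rw [lp.coeFn_sub, Pi.sub_apply, MZ_apply, MZ_apply]

lemma norm_MZ_pow (p q : ℝ) (hp : 0 < p) (hq : 0 < q)
    (f : lp (fun _ : ℕ => X) (ENNReal.ofReal p)) :
    ‖MZ p q hp hq f‖ ^ q = ‖f‖ ^ p := by
  have htp : (ENNReal.ofReal p).toReal = p := ENNReal.toReal_ofReal hp.le
  have htq : (ENNReal.ofReal q).toReal = q := ENNReal.toReal_ofReal hq.le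
  have h1 := lp.norm_rpow_eq_tsum (p := ENNReal.ofReal q)
    (by rw [htq]; exact hq) (MZ p q hp hq f)
  have h2 := lp.norm_rpow_eq_tsum (p := ENNReal.ofReal p) (by rw [htp]; exact hp) f
  rw [htq] at h1; rw [htp] at h2
  rw [h1, h2]
  refine tsum_congr fun n => ?_
  rw [MZ_apply, norm_mz _ (div_pos hp hq), ← Real.rpow_mul (norm_nonneg _),
    div_mul_cancel₀ _ hq.ne']

lemma norm_MZ (p q : ℝ) (hp : 0 < p) (hq : 0 < q)
    [Fact (1 ≤ ENNReal.ofReal q)]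
    (f : lp (fun _ : ℕ => X) (ENNReal.ofReal p)) (hf : ‖f‖ = 1) :
    ‖MZ p q hp hq f‖ = 1 := by
  have h := norm_MZ_pow p q hp hq f
  rw [hf, Real.one_rpow] at h
  have h2 : ‖MZ p q hp hq f‖ = (‖MZ p q hp hq f‖ ^ q) ^ (1/q) := by
    rw [← Real.rpow_mul (norm_nonneg _), mul_one_div, div_self hq.ne', Real.rpow_one]
  rw [h2, h, Real.one_rpow]

lemma summable_coord (p : ℝ) (hp : 0 < p) (f : lp (fun _ : ℕ => X) (ENNReal.ofReal p)) :
    Summable fun n => ‖f n‖ ^ p := by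
  have htp : (ENNReal.ofReal p).toReal = p := ENNReal.toReal_ofReal hp.le
  have := (memℓp_gen_iff (p := ENNReal.ofReal p) (by rw [htp]; exact hp)).1 (lp.memℓp f)
  rwa [htp] at this

lemma norm_rpow_tsum (p : ℝ) (hp : 0 < p) (f : lp (fun _ : ℕ => X) (ENNReal.ofReal p)) :
    ‖f‖ ^ p = ∑' n, ‖f n‖ ^ p := by
  have htp : (ENNReal.ofReal p).toReal = p := ENNReal.toReal_ofReal hp.le
  have := lp.norm_rpow_eq_tsum (p := ENNReal.ofReal p) (by rw [htp]; exact hp) f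
  rwa [htp] at this


lemma MZ_est_le (p q : ℝ) (hp : 0 < p) (hq : 0 < q) (hpq : p ≤ q)
    [Fact (1 ≤ ENNReal.ofReal p)] [Fact (1 ≤ ENNReal.ofReal q)]
    (f g : lp (fun _ : ℕ => X) (ENNReal.ofReal p)) :
    ‖MZ p q hp hq f - MZ p q hp hq g‖ ≤ 2 * ‖f - g‖ ^ (p/q) := by
  have hα0 : 0 < p / q := div_pos hp hq
  have hα1 : p / q ≤ 1 := (div_le_one hq).2 hpq
  rw [← Real.rpow_le_rpow_iff (norm_nonneg _) (by positivity) hq]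
  have hexp : (2 * ‖f - g‖ ^ (p/q)) ^ q = 2 ^ q * ‖f - g‖ ^ p := by
    rw [Real.mul_rpow (by norm_num) (Real.rpow_nonneg (norm_nonneg _) _),
      ← Real.rpow_mul (norm_nonneg _), div_mul_cancel₀ _ hq.ne']
  rw [hexp, norm_rpow_tsum q hq (MZ p q hp hq f - MZ p q hp hq g)]
  have hterm : ∀ n, ‖(MZ p q hp hq f - MZ p q hp hq g) n‖ ^ q ≤ 2 ^ q * ‖(f - g) n‖ ^ p := by
    intro n
    rw [MZ_sub_apply]
    have h1 := mz_est_le hα0 hα1 (f n) (g n)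
    have h2 := Real.rpow_le_rpow (norm_nonneg _) h1 hq.le
    calc ‖mz (p/q) (f n) - mz (p/q) (g n)‖ ^ q ≤ (2 * ‖f n - g n‖ ^ (p/q)) ^ q := h2
      _ = 2 ^ q * ‖f n - g n‖ ^ p := by
          rw [Real.mul_rpow (by norm_num) (Real.rpow_nonneg (norm_nonneg _) _),
            ← Real.rpow_mul (norm_nonneg _), div_mul_cancel₀ _ hq.ne']
      _ = 2 ^ q * ‖(f - g) n‖ ^ p := by rw [lp.coeFn_sub, Pi.sub_apply]
  have hsum1 : Summable fun n => ‖(MZ p q hp hq f - MZ p q hp hq g) n‖ ^ q :=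
    summable_coord q hq _
  have hsum2 : Summable fun n => 2 ^ q * ‖(f - g) n‖ ^ p :=
    (summable_coord p hp (f - g)).mul_left _
  calc ∑' n, ‖(MZ p q hp hq f - MZ p q hp hq g) n‖ ^ q
      ≤ ∑' n, 2 ^ q * ‖(f - g) n‖ ^ p := Summable.tsum_le_tsum hterm hsum1 hsum2
    _ = 2 ^ q * ∑' n, ‖(f - g) n‖ ^ p := tsum_mul_left
    _ = 2 ^ q * ‖f - g‖ ^ p := by rw [← norm_rpow_tsum p hp]

lemma MZ_est_ge' (p q : ℝ) (hp : 0 < p) (hq : 0 < q) (hqp : q < p)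
    [Fact (1 ≤ ENNReal.ofReal p)] [Fact (1 ≤ ENNReal.ofReal q)]
    (f g : lp (fun _ : ℕ => X) (ENNReal.ofReal p)) (hf : ‖f‖ ≤ 1) (hg : ‖g‖ ≤ 1) :
    ‖MZ p q hp hq f - MZ p q hp hq g‖ ≤ ((p/q) * 2 ^ ((p-q)/(p*q))) * ‖f - g‖ := by
  have hα1 : 1 ≤ p / q := (one_le_div hq).2 hqp.le
  have hα0 : 0 < p / q := by linarith
  have hpq0 : 0 < p - q := by linarith
  -- Hölder exponents
  set u : ℝ := p / (p - q) with hu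
  set v : ℝ := p / q with hv
  have huv : u.HolderConjugate v := by
    constructor
    · rw [inv_one, hu, hv, inv_div, inv_div, ← add_div, sub_add_cancel, div_self hp.ne']
    · rw [hu]; exact div_pos hp hpq0
    · rw [hv]; exact div_pos hp hq
  -- coordinate functions
  set m : ℕ → ℝ := fun n => max ‖f n‖ ‖g n‖ with hm
  set d : ℕ → ℝ := fun n => ‖(f - g) n‖ with hd
  have hmnn : ∀ n, 0 ≤ m n := fun n => le_max_of_le_left (norm_nonneg _)
  have hdnn : ∀ n, 0 ≤ d n := fun n => norm_nonneg _
  have hAu : ∀ n, (m n ^ (p - q)) ^ u = m n ^ p := by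
    intro n
    rw [← Real.rpow_mul (hmnn n)]
    congr 1
    rw [hu]
    field_simp
  have hBv : ∀ n, (d n ^ q) ^ v = d n ^ p := by
    intro n
    rw [← Real.rpow_mul (hdnn n)]
    congr 1
    rw [hv]
    field_simp
  have hmp_le : ∀ n, m n ^ p ≤ ‖f n‖ ^ p + ‖g n‖ ^ p := by
    intro n
    rcases le_total ‖f n‖ ‖g n‖ with h | h
    · simp only [hm, max_eq_right h]
      have := Real.rpow_nonneg (norm_nonneg (f n)) p
      linarith
    · simp only [hm, max_eq_left h]
      have := Real.rpow_nonneg (norm_nonneg (g n)) p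
      linarith
  have hsum_fg : Summable fun n => ‖f n‖ ^ p + ‖g n‖ ^ p :=
    (summable_coord p hp f).add (summable_coord p hp g)
  have hsum_m : Summable fun n => m n ^ p :=
    Summable.of_nonneg_of_le (fun n => Real.rpow_nonneg (hmnn n) p) hmp_le hsum_fg
  have hsum_d : Summable fun n => d n ^ p := summable_coord p hp (f - g)
  have hsum_Au : Summable fun n => (m n ^ (p - q)) ^ u := by
    refine hsum_m.congr fun n => ?_
    rw [hAu]
  have hsum_Bv : Summable fun n => (d n ^ q) ^ v := by
    refine hsum_d.congr fun n => ?_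
    rw [hBv]
  have hH := Real.summable_and_inner_le_Lp_mul_Lq_tsum_of_nonneg (f := fun n => m n ^ (p - q))
    (g := fun n => d n ^ q) huv (fun n => Real.rpow_nonneg (hmnn n) _)
    (fun n => Real.rpow_nonneg (hdnn n) _) hsum_Au hsum_Bv
  -- sum of m^p is at most 2
  have hfp : ∑' n, ‖f n‖ ^ p ≤ 1 := by
    rw [← norm_rpow_tsum p hp f]
    exact Real.rpow_le_one (norm_nonneg f) hf hp.le
  have hgp : ∑' n, ‖g n‖ ^ p ≤ 1 := by
    rw [← norm_rpow_tsum p hp g]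
    exact Real.rpow_le_one (norm_nonneg g) hg hp.le
  have hm2 : ∑' n, m n ^ p ≤ 2 := by
    calc ∑' n, m n ^ p ≤ ∑' n, (‖f n‖ ^ p + ‖g n‖ ^ p) :=
          Summable.tsum_le_tsum hmp_le hsum_m hsum_fg
      _ = (∑' n, ‖f n‖ ^ p) + ∑' n, ‖g n‖ ^ p :=
          Summable.tsum_add (summable_coord p hp f) (summable_coord p hp g)
      _ ≤ 2 := by linarith
  -- termwise estimate
  have hterm : ∀ n, ‖(MZ p q hp hq f - MZ p q hp hq g) n‖ ^ q
      ≤ (p/q) ^ q * (m n ^ (p - q) * d n ^ q) := by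
    intro n
    rw [MZ_sub_apply]
    have h1 := mz_est_ge (α := p/q) hα1 (f n) (g n)
    have h2 := Real.rpow_le_rpow (norm_nonneg _) h1 hq.le
    refine h2.trans (le_of_eq ?_)
    have h3 : f n - g n = (f - g) n := by rw [lp.coeFn_sub, Pi.sub_apply]
    rw [h3]
    rw [Real.mul_rpow (by positivity) (norm_nonneg _),
      Real.mul_rpow (by positivity) (by positivity),
      ← Real.rpow_mul (hmnn n)]
    have h4 : (p/q - 1) * q = p - q := by field_simp
    rw [h4, mul_assoc]
  have hsum1 : Summable fun n => ‖(MZ p q hp hq f - MZ p q hp hq g) n‖ ^ q :=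
    summable_coord q hq _
  have hsum2 : Summable fun n => (p/q) ^ q * (m n ^ (p - q) * d n ^ q) :=
    hH.1.mul_left _
  -- main computation
  rw [← Real.rpow_le_rpow_iff (norm_nonneg _) (by positivity) hq,
    norm_rpow_tsum q hq (MZ p q hp hq f - MZ p q hp hq g)]
  have hchain : ∑' n, ‖(MZ p q hp hq f - MZ p q hp hq g) n‖ ^ q
      ≤ (p/q) ^ q * (2 ^ ((p-q)/p) * ‖f - g‖ ^ q) := by
    calc ∑' n, ‖(MZ p q hp hq f - MZ p q hp hq g) n‖ ^ q
        ≤ ∑' n, (p/q) ^ q * (m n ^ (p - q) * d n ^ q) := Summable.tsum_le_tsum hterm hsum1 hsum2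
      _ = (p/q) ^ q * ∑' n, m n ^ (p - q) * d n ^ q := tsum_mul_left
      _ ≤ (p/q) ^ q * ((∑' n, (m n ^ (p - q)) ^ u) ^ (1/u) * (∑' n, (d n ^ q) ^ v) ^ (1/v)) := by
          apply mul_le_mul_of_nonneg_left hH.2 (by positivity)
      _ = (p/q) ^ q * ((∑' n, m n ^ p) ^ (1/u) * (∑' n, d n ^ p) ^ (1/v)) := by
          rw [tsum_congr hAu, tsum_congr hBv]
      _ ≤ (p/q) ^ q * (2 ^ (1/u) * (∑' n, d n ^ p) ^ (1/v)) := by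
          apply mul_le_mul_of_nonneg_left _ (by positivity)
          apply mul_le_mul_of_nonneg_right _ (Real.rpow_nonneg (tsum_nonneg fun n => Real.rpow_nonneg (hdnn n) p) _)
          exact Real.rpow_le_rpow (tsum_nonneg fun n => Real.rpow_nonneg (hmnn n) p) hm2 (by positivity)
      _ = (p/q) ^ q * (2 ^ ((p-q)/p) * ‖f - g‖ ^ q) := by
          rw [← norm_rpow_tsum p hp (f - g), ← Real.rpow_mul (norm_nonneg _)]
          congr 2
          · rw [hu, one_div, inv_div]
          · rw [hv, one_div, inv_div]
            field_simp
  refine hchain.trans (le_of_eq ?_)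
  rw [Real.mul_rpow (by positivity) (norm_nonneg _),
    Real.mul_rpow (by positivity) (by positivity),
    ← Real.rpow_mul (by norm_num : (0:ℝ) ≤ 2)]
  have he : (p-q)/(p*q) * q = (p-q)/p := by
    field_simp
  rw [he]
  ring


lemma MZ_est (p q : ℝ) (hp : 0 < p) (hq : 0 < q)
    [Fact (1 ≤ ENNReal.ofReal p)] [Fact (1 ≤ ENNReal.ofReal q)] :
    ∃ C : ℝ, 0 < C ∧ ∀ f g : lp (fun _ : ℕ => X) (ENNReal.ofReal p),
      ‖f‖ ≤ 1 → ‖g‖ ≤ 1 →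
      ‖MZ p q hp hq f - MZ p q hp hq g‖ ≤ C * ‖f - g‖ ^ (min (p/q) 1) := by
  rcases le_or_gt p q with hpq | hqp
  · refine ⟨2, by norm_num, fun f g hf hg => ?_⟩
    rw [min_eq_left ((div_le_one hq).2 hpq)]
    exact MZ_est_le p q hp hq hpq f g
  · refine ⟨(p/q) * 2 ^ ((p-q)/(p*q)), by positivity, fun f g hf hg => ?_⟩
    rw [min_eq_right ((one_le_div hq).2 hqp.le), Real.rpow_one]
    exact MZ_est_ge' p q hp hq hqp f g hf hg

lemma uc_of_bound {A B : Type*} [PseudoMetricSpace A] [PseudoMetricSpace B]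
    (F : A → B) (C e : ℝ) (hC : 0 < C) (he : 0 < e)
    (h : ∀ x y, dist (F x) (F y) ≤ C * dist x y ^ e) : UniformContinuous F := by
  rw [Metric.uniformContinuous_iff]
  intro ε hε
  refine ⟨(ε/C) ^ (1/e), by positivity, fun {a b} hab => ?_⟩
  calc dist (F a) (F b) ≤ C * dist a b ^ e := h a b
    _ < C * ((ε/C) ^ (1/e)) ^ e := by
        apply mul_lt_mul_of_pos_left _ hC
        exact Real.rpow_lt_rpow dist_nonneg hab he
    _ = ε := by
        rw [← Real.rpow_mul (by positivity), one_div, inv_mul_cancel₀ he.ne', Real.rpow_one]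
        field_simp

end lpLevel

end MazurAux

namespace MazurAux
section
variable {X : Type*} [NormedAddCommGroup X] [NormedSpace ℝ X]

lemma norm_one_of_mem {r : ℝ≥0∞} [Fact (1 ≤ r)] {f : lp (fun _ : ℕ => X) r}
    (hf : f ∈ Metric.sphere (0 : lp (fun _ : ℕ => X) r) 1) : ‖f‖ = 1 := by
  rwa [mem_sphere_zero_iff_norm] at hf

lemma sphMZ_mem (p q : ℝ) (hp : 0 < p) (hq : 0 < q)
    [Fact (1 ≤ ENNReal.ofReal p)] [Fact (1 ≤ ENNReal.ofReal q)]
    (f : lp (fun _ : ℕ => X) (ENNReal.ofReal p))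
    (hf : f ∈ Metric.sphere (0 : lp (fun _ : ℕ => X) (ENNReal.ofReal p)) 1) :
    MZ p q hp hq f ∈ Metric.sphere (0 : lp (fun _ : ℕ => X) (ENNReal.ofReal q)) 1 := by
  rw [mem_sphere_zero_iff_norm] at hf ⊢
  exact norm_MZ p q hp hq f hf

def sphMZ (p q : ℝ) (hp : 0 < p) (hq : 0 < q)
    [Fact (1 ≤ ENNReal.ofReal p)] [Fact (1 ≤ ENNReal.ofReal q)]
    (x : Metric.sphere (0 : lp (fun _ : ℕ => X) (ENNReal.ofReal p)) 1) :
    Metric.sphere (0 : lp (fun _ : ℕ => X) (ENNReal.ofReal q)) 1 :=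
  ⟨MZ p q hp hq x.1, sphMZ_mem p q hp hq x.1 x.2⟩

def sphEquiv (p q : ℝ) (hp : 0 < p) (hq : 0 < q)
    [Fact (1 ≤ ENNReal.ofReal p)] [Fact (1 ≤ ENNReal.ofReal q)] :
    Metric.sphere (0 : lp (fun _ : ℕ => X) (ENNReal.ofReal p)) 1 ≃
      Metric.sphere (0 : lp (fun _ : ℕ => X) (ENNReal.ofReal q)) 1 where
  toFun := sphMZ p q hp hq
  invFun := sphMZ q p hq hp
  left_inv x := Subtype.ext (MZ_MZ p q hp hq x.1)
  right_inv y := Subtype.ext (MZ_MZ q p hq hp y.1)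
end
end MazurAux

open MazurAux in
set_option maxHeartbeats 1000000 in
theorem lp_sphere_equivalence_uniformly_convex
    (X : Type*) [NormedAddCommGroup X] [NormedSpace ℝ X] [CompleteSpace X]
    [UniformConvexSpace X]
    (p q : ℝ) (hp : 1 < p) (hq : 1 < q)
    [Fact (1 ≤ ENNReal.ofReal p)] [Fact (1 ≤ ENNReal.ofReal q)] :
    ∃ Φ : Metric.sphere (0 : lp (fun _ : ℕ => X) (ENNReal.ofReal p)) 1 ≃
          Metric.sphere (0 : lp (fun _ : ℕ => X) (ENNReal.ofReal q)) 1,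
      UniformContinuous Φ ∧ UniformContinuous Φ.symm ∧
      ∀ (σ : Equiv.Perm ℕ)
        (x y : Metric.sphere (0 : lp (fun _ : ℕ => X) (ENNReal.ofReal p)) 1),
        (∀ i, (↑y : lp (fun _ : ℕ => X) (ENNReal.ofReal p)) i =
              (↑x : lp (fun _ : ℕ => X) (ENNReal.ofReal p)) (σ⁻¹ i)) →
        ∀ i, (↑(Φ y) : lp (fun _ : ℕ => X) (ENNReal.ofReal q)) i =
             (↑(Φ x) : lp (fun _ : ℕ => X) (ENNReal.ofReal q)) (σ⁻¹ i) := by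
  have hp0 : 0 < p := zero_lt_one.trans hp
  have hq0 : 0 < q := zero_lt_one.trans hq
  refine ⟨sphEquiv p q hp0 hq0, ?_, ?_, ?_⟩
  · obtain ⟨C, hC, hest⟩ := MZ_est (X := X) p q hp0 hq0
    refine uc_of_bound _ C (min (p/q) 1) hC (lt_min (div_pos hp0 hq0) one_pos) ?_
    intro x y
    rw [Subtype.dist_eq, Subtype.dist_eq, dist_eq_norm, dist_eq_norm]
    exact hest x.1 y.1 (norm_one_of_mem x.2).le (norm_one_of_mem y.2).le
  · obtain ⟨C, hC, hest⟩ := MZ_est (X := X) q p hq0 hp0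
    refine uc_of_bound _ C (min (q/p) 1) hC (lt_min (div_pos hq0 hp0) one_pos) ?_
    intro x y
    rw [Subtype.dist_eq, Subtype.dist_eq, dist_eq_norm, dist_eq_norm]
    exact hest x.1 y.1 (norm_one_of_mem x.2).le (norm_one_of_mem y.2).le
  · intro σ x y hxy i
    show (MZ p q hp0 hq0 y.1) i = (MZ p q hp0 hq0 x.1) (σ⁻¹ i)
    rw [MZ_apply, MZ_apply, hxy i]
end
end
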